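/- arXiv:2007.12169 — 9 statements merged into one kernel-verified Lean document; each statement's English description precedes it below -/
import Mathlib

section
/- Let δ^n (n ≥ 2) be finite-support coefficient functions with ord(δ^n) = n−1, and let 𝓔 be the ascendingly-ordered collection determined by {δ^n : n ≥ 2}. Then 𝓔 is a Zeckendorf collection for positive integers, the immediate predecessor of β^n in 𝓔 equals δ^n for every n ≥ 2, and 𝓔 is the only Zeckendorf collection for positive integers in which the immediate predecessor of β^n equals δ^n for every n ≥ 2. -/
/-!
Reading upwards from index `1`, every element of the determined collection `𝓔` splits into a
maximal block `d (b + 1)` on `[1, b]` (possibly empty) followed by proper blocks, and this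
decomposition is unique. The immediate successor of `μ ∈ 𝓔` is then
`β^{b+1} + μ|_{[b+1,∞)}`: bumping the first proper block either keeps it proper or, once it reaches
`d`, extends it downwards through the zeros. Everything in `𝓔` below `β^n` is decomposed on
`[1, n - 1]` and is therefore lexicographically at most `d n`, so `d n` is the predecessor of `β^n`.

For uniqueness, let `F` be another such collection. Immediate successors in `F` are bumps, and
undoing a bump preserves decompositions, so walking down from `d N ∈ F ∩ 𝓔` gives `F ⊆ 𝓔`. In any
Zeckendorf collection with predecessors `d` the rank of `μ` is `∑ μ_j w_j` with
`w_m = 1 + ∑_j d(m)_j w_j`, so `F` and `𝓔` have equally many elements below each `β^m`.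
-/

/-- The `i`-th basis coefficient function `β^i`. -/
def beta (i : ℕ) : ℕ → ℕ := fun k => if k = i then 1 else 0

/-- A coefficient function has finite support. -/
def FinSupp (ε : ℕ → ℕ) : Prop := (Function.support ε).Finite

/-- The ascending lexicographical order `μ <_a ν` on finite-support coefficient
functions: there is a (necessarily largest) index `k` with `μ k < ν k` and
`μ j = ν j` for all `j > k`. -/
def AscLt (μ ν : ℕ → ℕ) : Prop := ∃ k, μ k < ν k ∧ ∀ j, k < j → μ j = ν j

/-- An ascendingly-ordered collection of coefficient functions: a set of
finite-support coefficient functions on the indices `{1,2,...}` (so vanishing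
at the dummy index `0`) containing the zero function and every `β^i`. -/
def IsCollection (E : Set (ℕ → ℕ)) : Prop :=
  (∀ ε ∈ E, ε 0 = 0 ∧ FinSupp ε) ∧ (0 : ℕ → ℕ) ∈ E ∧ ∀ i, 1 ≤ i → beta i ∈ E

/-- `ν` is the immediate successor of `μ` in `E`. -/
def IsImmSucc (E : Set (ℕ → ℕ)) (μ ν : ℕ → ℕ) : Prop :=
  ν ∈ E ∧ AscLt μ ν ∧ ∀ σ ∈ E, AscLt μ σ → σ = ν ∨ AscLt ν σ

/-- `ν` is the immediate predecessor of `μ` in `E`. -/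
def IsImmPred (E : Set (ℕ → ℕ)) (μ ν : ℕ → ℕ) : Prop :=
  ν ∈ E ∧ AscLt ν μ ∧ ∀ σ ∈ E, AscLt σ μ → σ = ν ∨ AscLt σ ν

/-- A Zeckendorf collection for positive integers. -/
def IsZeckendorf (E : Set (ℕ → ℕ)) : Prop :=
  IsCollection E ∧
  (∀ μ ∈ E, {σ | σ ∈ E ∧ AscLt σ μ}.Finite) ∧
  ∀ μ ∈ E, ∃ ν, IsImmSucc E μ ν ∧
    ((ν = fun k => beta 1 k + μ k) ∨
      ∃ n, 2 ≤ n ∧ ∃ δ, IsImmPred E (beta n) δ ∧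
        (∀ j, 1 ≤ j → j < n → μ j = δ j) ∧
        (ν = fun k => beta n k + if n ≤ k then μ k else 0))

/-- `ζ` is a proper `d`-block at index `n` with support `[i, n]` (relative to a
family `d` playing the role of the immediate predecessors `β̂^{n+1}`):
either `ζ` is the zero function (a proper block at any index `n ≥ 1`, with
support `[n,n]`), or `1 ≤ i ≤ n`, `ζ i < d (n+1) i`, `ζ` agrees with `d (n+1)`
on the indices in `(i, n]`, and `ζ` vanishes outside `[i, n]`. -/
def IsProperBlockAt (d : ℕ → ℕ → ℕ) (ζ : ℕ → ℕ) (i n : ℕ) : Prop :=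
  ((∀ k, ζ k = 0) ∧ i = n ∧ 1 ≤ n) ∨
    (1 ≤ i ∧ i ≤ n ∧ ζ i < d (n + 1) i ∧
      (∀ j, i < j → j ≤ n → ζ j = d (n + 1) j) ∧
      ∀ s, s < i ∨ n < s → ζ s = 0)

/-- `ζ` is the maximal `d`-block at index `n` (with support `[1, n]`),
namely `ζ = d (n+1)`. -/
def IsMaxBlockAt (d : ℕ → ℕ → ℕ) (ζ : ℕ → ℕ) (n : ℕ) : Prop :=
  1 ≤ n ∧ ζ = d (n + 1)

/-- `μ = Σ_{m=1}^M ζ m` is a `d`-block decomposition: `ζ 1` is a `d`-block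
(proper or maximal) with support `[i 1, n 1]` where `i 1 = 1`, each `ζ m` with
`2 ≤ m ≤ M` is a proper `d`-block with support `[i m, n m]`, and the supports
are consecutive: `i (m+1) = n m + 1`. -/
def IsBlockDecomp (d : ℕ → ℕ → ℕ) (μ : ℕ → ℕ) (M : ℕ)
    (ζ : ℕ → ℕ → ℕ) (i n : ℕ → ℕ) : Prop :=
  1 ≤ M ∧ i 1 = 1 ∧
  (IsProperBlockAt d (ζ 1) (i 1) (n 1) ∨ IsMaxBlockAt d (ζ 1) (n 1)) ∧
  (∀ m, 2 ≤ m → m ≤ M → IsProperBlockAt d (ζ m) (i m) (n m)) ∧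
  (∀ m, 1 ≤ m → m < M → i (m + 1) = n m + 1) ∧
  ∀ k, μ k = ∑ m ∈ Finset.Icc 1 M, ζ m k

/-- The ascendingly-ordered collection determined by the family `d`, i.e. the
set of all sums of `d`-block decompositions. -/
def DeterminedCollection (d : ℕ → ℕ → ℕ) : Set (ℕ → ℕ) :=
  {μ | ∃ M ζ i n, IsBlockDecomp d μ M ζ i n}

open Finset

lemma beta_self (i : ℕ) : beta i i = 1 := if_pos rfl

lemma beta_of_ne {i k : ℕ} (h : k ≠ i) : beta i k = 0 := if_neg h

lemma FinSupp.exists_bound {μ : ℕ → ℕ} (h : FinSupp μ) : ∃ B, ∀ j, B < j → μ j = 0 := by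
  obtain ⟨B, hB⟩ := h.bddAbove
  exact ⟨B, fun j hj => by_contra fun hne => absurd (hB hne) (by omega)⟩

lemma finSupp_of_bound {μ : ℕ → ℕ} {B : ℕ} (hB : ∀ j, B < j → μ j = 0) : FinSupp μ :=
  (Set.finite_Iic B).subset fun j hj => by_contra fun h => hj (hB j (not_le.1 h))

namespace AscLt

lemma irrefl {μ : ℕ → ℕ} : ¬ AscLt μ μ := fun ⟨_, hk, _⟩ => hk.false

lemma asymm {μ ν : ℕ → ℕ} (h : AscLt μ ν) : ¬ AscLt ν μ := by
  obtain ⟨k, hk, hμν⟩ := h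
  rintro ⟨l, hl, hνμ⟩
  rcases lt_trichotomy k l with h | rfl | h
  · have := hμν l h; omega
  · omega
  · have := hνμ k h; omega

lemma trans {μ ν σ : ℕ → ℕ} (h₁ : AscLt μ ν) (h₂ : AscLt ν σ) : AscLt μ σ := by
  obtain ⟨k, hk, hμν⟩ := h₁
  obtain ⟨l, hl, hνσ⟩ := h₂
  rcases lt_trichotomy k l with h | rfl | h
  · exact ⟨l, hμν l h ▸ hl, fun j hj => (hμν j (by omega)).trans (hνσ j hj)⟩
  · exact ⟨k, hk.trans hl, fun j hj => (hμν j hj).trans (hνσ j hj)⟩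
  · exact ⟨k, (hνσ k h) ▸ hk, fun j hj => (hμν j hj).trans (hνσ j (by omega))⟩

end AscLt

lemma ascLt_trichotomy {μ ν : ℕ → ℕ} (hμ : FinSupp μ) (hν : FinSupp ν) :
    μ = ν ∨ AscLt μ ν ∨ AscLt ν μ := by
  classical
  by_cases he : μ = ν
  · exact Or.inl he
  obtain ⟨B₁, h₁⟩ := hμ.exists_bound
  obtain ⟨B₂, h₂⟩ := hν.exists_bound
  obtain ⟨m, hm⟩ : ∃ m, μ m ≠ ν m := Function.ne_iff.1 he
  have hmB : m ≤ B₁ + B₂ := by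
    by_contra h
    exact hm (by rw [h₁ m (by omega), h₂ m (by omega)])
  set k := Nat.findGreatest (fun k => μ k ≠ ν k) (B₁ + B₂)
  have hk : μ k ≠ ν k := Nat.findGreatest_spec (P := fun k => μ k ≠ ν k) hmB hm
  have above : ∀ j, k < j → μ j = ν j := fun j hj => by
    by_cases hjB : j ≤ B₁ + B₂
    · exact not_not.1 (Nat.findGreatest_is_greatest hj hjB)
    · rw [h₁ j (by omega), h₂ j (by omega)]
  rcases Nat.lt_or_gt_of_ne hk with h | h
  · exact Or.inr (Or.inl ⟨k, h, above⟩)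
  · exact Or.inr (Or.inr ⟨k, h, fun j hj => (above j hj).symm⟩)

lemma ascLt_beta_iff {σ : ℕ → ℕ} {n : ℕ} : AscLt σ (beta n) ↔ ∀ j, n ≤ j → σ j = 0 := by
  constructor
  · rintro ⟨k, hk, hab⟩ j hj
    have hkn : k = n := by_contra fun h => by rw [beta_of_ne h] at hk; omega
    subst hkn
    rcases hj.lt_or_eq with h | rfl
    · rw [hab j h, beta_of_ne (by omega)]
    · rw [beta_self] at hk; omega
  · intro h
    refine ⟨n, by rw [beta_self, h n le_rfl]; omega, fun j hj => ?_⟩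
    rw [h j hj.le, beta_of_ne (by omega)]

lemma zero_ascLt {σ : ℕ → ℕ} (hσ : FinSupp σ) (h : σ ≠ 0) : AscLt 0 σ := by
  rcases ascLt_trichotomy (finSupp_of_bound (B := 0) fun _ _ => rfl) hσ with h' | h' | ⟨_, hk, _⟩
  · exact absurd h'.symm h
  · exact h'
  · exact absurd hk (Nat.not_lt_zero _)

lemma not_ascLt_zero {σ : ℕ → ℕ} : ¬ AscLt σ 0 := fun ⟨_, hk, _⟩ => Nat.not_lt_zero _ hk

/-- The candidate successor `β^q + μ|_{[q,∞)}` of the Zeckendorf rule. -/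
def bump (μ : ℕ → ℕ) (q : ℕ) : ℕ → ℕ := fun k => beta q k + if q ≤ k then μ k else 0

section Bump

variable {μ : ℕ → ℕ} {q k : ℕ}

lemma bump_of_lt (h : k < q) : bump μ q k = 0 := by
  simp [bump, beta_of_ne h.ne, h]

lemma bump_self : bump μ q q = μ q + 1 := by
  simp [bump, beta_self, add_comm]

lemma bump_of_gt (h : q < k) : bump μ q k = μ k := by
  simp [bump, beta_of_ne h.ne', h.le]

lemma ascLt_bump : AscLt μ (bump μ q) :=
  ⟨q, by rw [bump_self]; omega, fun _ hj => (bump_of_gt hj).symm⟩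

lemma finSupp_bump (hμ : FinSupp μ) : FinSupp (bump μ q) := by
  obtain ⟨B, hB⟩ := hμ.exists_bound
  exact finSupp_of_bound (B := B + q) fun j hj => by rw [bump_of_gt (by omega), hB j (by omega)]

lemma bump_one_eq (h : μ 0 = 0) : bump μ 1 = fun k => beta 1 k + μ k := by
  funext k
  rcases k with _ | k
  · simp [bump_of_lt, beta_of_ne, h]
  · simp [bump]

/-- `bump μ q` is the least function above `μ` among those whose top disagreement with `μ` lies
at an index `≥ q`. -/
lemma eq_bump_or_bump_ascLt {σ : ℕ → ℕ} {t : ℕ} (hμ : FinSupp μ) (hσ : FinSupp σ)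
    (ht : μ t < σ t) (hagree : ∀ j, t < j → μ j = σ j) (hqt : q ≤ t) :
    σ = bump μ q ∨ AscLt (bump μ q) σ := by
  rcases ascLt_trichotomy hσ (finSupp_bump hμ (q := q)) with h | ⟨k, hk, habove⟩ | h
  · exact Or.inl h
  · exfalso
    rcases lt_trichotomy k q with hkq | rfl | hkq
    · rw [bump_of_lt hkq] at hk; omega
    · rw [bump_self] at hk
      rcases hqt.lt_or_eq with hlt | rfl
      · have := habove t hlt; rw [bump_of_gt hlt] at this; omega
      · omega
    · rw [bump_of_gt hkq] at hk
      rcases lt_trichotomy k t with hkt | rfl | hkt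
      · have := habove t hkt; rw [bump_of_gt (by omega)] at this; omega
      · omega
      · have := hagree k hkt; omega
  · exact Or.inr h

end Bump

section Zeckendorf

variable {G : Set (ℕ → ℕ)} {σ p : ℕ → ℕ}

lemma IsImmSucc.unique {ν ν' : ℕ → ℕ} (h : IsImmSucc G σ ν) (h' : IsImmSucc G σ ν') : ν = ν' :=
  (h.2.2 ν' h'.1 h'.2.1).elim Eq.symm fun hlt =>
    (h'.2.2 ν h.1 h.2.1).elim id fun hlt' => absurd hlt' hlt.asymm

lemma IsImmPred.unique {ν ν' : ℕ → ℕ} (h : IsImmPred G σ ν) (h' : IsImmPred G σ ν') : ν = ν' :=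
  (h.2.2 ν' h'.1 h'.2.1).elim Eq.symm fun hlt =>
    (h'.2.2 ν h.1 h.2.1).elim id fun hlt' => absurd hlt' hlt.asymm

noncomputable def ascRank (G : Set (ℕ → ℕ)) (σ : ℕ → ℕ) : ℕ :=
  {τ | τ ∈ G ∧ AscLt τ σ}.ncard

namespace IsZeckendorf

variable (hG : IsZeckendorf G)
include hG

lemma finSupp (hσ : σ ∈ G) : FinSupp σ := (hG.1.1 σ hσ).2

lemma ascRank_lt_ascRank {τ : ℕ → ℕ} (hσ : σ ∈ G) (hτ : τ ∈ G) (h : AscLt σ τ) :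
    ascRank G σ < ascRank G τ :=
  Set.ncard_lt_ncard ⟨fun _ hρ => ⟨hρ.1, hρ.2.trans h⟩, fun hsub => AscLt.irrefl (hsub ⟨hσ, h⟩).2⟩
    (hG.2.1 τ hτ)

lemma exists_isImmPred (hσ : σ ∈ G) (hσ0 : σ ≠ 0) : ∃ p, IsImmPred G σ p := by
  obtain ⟨p, ⟨hpG, hpσ⟩, hmax⟩ := Set.exists_max_image _ (ascRank G) (hG.2.1 σ hσ)
    ⟨0, hG.1.2.1, zero_ascLt (hG.finSupp hσ) hσ0⟩
  refine ⟨p, hpG, hpσ, fun z hz hzσ => ?_⟩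
  rcases ascLt_trichotomy (hG.finSupp hz) (hG.finSupp hpG) with h | h | h
  · exact Or.inl h
  · exact Or.inr h
  · exact absurd (hmax z ⟨hz, hzσ⟩) (hG.ascRank_lt_ascRank hpG hz h).not_ge

lemma isImmSucc_of_isImmPred (hσ : σ ∈ G) (h : IsImmPred G σ p) : IsImmSucc G p σ := by
  refine ⟨hσ, h.2.1, fun z hz hpz => ?_⟩
  rcases ascLt_trichotomy (hG.finSupp hz) (hG.finSupp hσ) with h' | h' | h'
  · exact Or.inl h'
  · rcases h.2.2 z hz h' with rfl | h''
    exacts [absurd hpz AscLt.irrefl, absurd hpz h''.asymm]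
  · exact Or.inr h'

lemma ascRank_eq_succ (h : IsImmPred G σ p) : ascRank G σ = ascRank G p + 1 := by
  have hbelow : {τ | τ ∈ G ∧ AscLt τ σ} = insert p {τ | τ ∈ G ∧ AscLt τ p} := by
    ext τ
    refine ⟨fun ⟨hτ, hτσ⟩ => ?_, ?_⟩
    · exact (h.2.2 τ hτ hτσ).imp id fun hτp => ⟨hτ, hτp⟩
    · rintro (rfl | ⟨hτ, hτp⟩)
      exacts [⟨h.1, h.2.1⟩, ⟨hτ, hτp.trans h.2.1⟩]
  rw [ascRank, hbelow, Set.ncard_insert_of_notMem (fun hp => AscLt.irrefl hp.2) (hG.2.1 p h.1)]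
  rfl

lemma eq_zero_of_ascRank_eq_zero (hσ : σ ∈ G) (h : ascRank G σ = 0) : σ = 0 := by
  by_contra hσ0
  exact (Set.ncard_pos (hG.2.1 σ hσ)).2 ⟨0, hG.1.2.1, zero_ascLt (hG.finSupp hσ) hσ0⟩ |>.ne' h

lemma exists_eq_bump {d : ℕ → ℕ → ℕ} (hpred : ∀ n, 2 ≤ n → IsImmPred G (beta n) (d n))
    (hp : p ∈ G) (h : IsImmSucc G p σ) :
    ∃ q, 1 ≤ q ∧ (∀ j, 1 ≤ j → j < q → p j = d q j) ∧ σ = bump p q := by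
  obtain ⟨ν, hν, hform⟩ := hG.2.2 p hp
  rw [h.unique hν]
  rcases hform with rfl | ⟨n, hn, δ, hδ, hagree, rfl⟩
  · exact ⟨1, le_rfl, fun j h₁ h₂ => by omega, (bump_one_eq (hG.1.1 p hp).1).symm⟩
  · exact ⟨n, by omega, (hδ.unique (hpred n hn)) ▸ hagree, rfl⟩

end IsZeckendorf

/-- In a Zeckendorf collection with predecessors `d`, `β^m` has rank `weight d m`, one more than
the value of `d m`. Index `0` gets weight `0`, so the dummy coordinate never counts. -/
def weight (d : ℕ → ℕ → ℕ) : ℕ → ℕ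
  | 0 => 0
  | m + 1 => 1 + ∑ j : Fin (m + 1), d (m + 1) j * weight d j

noncomputable def weightedSum (w σ : ℕ → ℕ) : ℕ := ∑ᶠ j, σ j * w j

lemma weight_succ (d : ℕ → ℕ → ℕ) (m : ℕ) :
    weight d (m + 1) = 1 + ∑ j ∈ range (m + 1), d (m + 1) j * weight d j := by
  rw [weight, Fin.sum_univ_eq_sum_range (fun j => d (m + 1) j * weight d j)]

section WeightedSum

variable {w : ℕ → ℕ}

lemma weightedSum_eq_sum {B : ℕ} (hB : ∀ j, B < j → σ j = 0) :
    weightedSum w σ = ∑ j ∈ range (B + 1), σ j * w j :=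
  finsum_eq_sum_of_support_subset _ fun j hj => by
    by_contra h
    exact hj (by simp only [hB j (by simpa using h), zero_mul])

lemma weightedSum_zero : weightedSum w 0 = 0 := by simp [weightedSum]

lemma weightedSum_beta (m : ℕ) : weightedSum w (beta m) = w m := by
  rw [weightedSum_eq_sum (B := m) fun j hj => beta_of_ne (by omega),
    sum_eq_single_of_mem m (mem_range.2 m.lt_succ_self) fun j _ hj => by
      rw [beta_of_ne hj, zero_mul], beta_self, one_mul]

lemma weightedSum_bump {q : ℕ} (hσ : FinSupp σ) :
    weightedSum w (bump σ q) + ∑ j ∈ range q, σ j * w j = weightedSum w σ + w q := by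
  obtain ⟨B, hB⟩ := hσ.exists_bound
  have hpoint : ∀ j, bump σ q j * w j + (if j < q then σ j * w j else 0) =
      σ j * w j + if j = q then w q else 0 := fun j => by
    rcases lt_trichotomy j q with h | rfl | h
    · simp [bump_of_lt h, h, h.ne]
    · simp [bump_self, add_mul, add_comm]
    · simp [bump_of_gt h, h.ne', h.not_gt]
  have hrange : range q = (range (B + q + 1)).filter (· < q) := by
    ext j; simp only [mem_range, mem_filter]; omega
  rw [weightedSum_eq_sum (B := B + q) fun j hj => by rw [bump_of_gt (by omega), hB j (by omega)],
    weightedSum_eq_sum (B := B + q) fun j hj => hB j (by omega), hrange, sum_filter,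
    ← sum_add_distrib, sum_congr rfl fun j _ => hpoint j, sum_add_distrib, sum_ite_eq',
    if_pos (mem_range.2 (by omega))]

lemma weightedSum_bump_of_agree {d : ℕ → ℕ → ℕ} {q : ℕ} (hσ : FinSupp σ) (hq : 1 ≤ q)
    (hagree : ∀ j, 1 ≤ j → j < q → σ j = d q j) :
    weightedSum (weight d) (bump σ q) = weightedSum (weight d) σ + 1 := by
  have hlow : ∑ j ∈ range q, σ j * weight d j + 1 = weight d q := by
    obtain ⟨m, rfl⟩ : ∃ m, q = m + 1 := ⟨q - 1, by omega⟩
    rw [weight_succ, add_comm]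
    congr 1
    refine sum_congr rfl fun j hj => ?_
    rcases j with _ | j
    · simp [weight]
    · rw [hagree _ (by omega) (by simpa using hj)]
  have := weightedSum_bump (w := weight d) (q := q) hσ
  omega

end WeightedSum

/-- Each immediate successor is a bump, which adds exactly one to the weighted sum. -/
theorem IsZeckendorf.ascRank_eq_weightedSum {d : ℕ → ℕ → ℕ} (hG : IsZeckendorf G)
    (hpred : ∀ n, 2 ≤ n → IsImmPred G (beta n) (d n)) (hσ : σ ∈ G) :
    ascRank G σ = weightedSum (weight d) σ := by
  induction h : ascRank G σ generalizing σ with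
  | zero => rw [hG.eq_zero_of_ascRank_eq_zero hσ h, weightedSum_zero]
  | succ k ih =>
    have hσ0 : σ ≠ 0 := by
      rintro rfl
      simp [ascRank, not_ascLt_zero] at h
    obtain ⟨p, hp⟩ := hG.exists_isImmPred hσ hσ0
    obtain ⟨q, hq, hagree, rfl⟩ :=
      hG.exists_eq_bump hpred hp.1 (hG.isImmSucc_of_isImmPred hσ hp)
    rw [weightedSum_bump_of_agree (hG.finSupp hp.1) hq hagree,
      ← ih hp.1 (by have := hG.ascRank_eq_succ hp; omega)]

end Zeckendorf

section Tiling

variable (d : ℕ → ℕ → ℕ)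

/-- The paper's zero block at index `p` is the case `i = p`, `μ p = 0`, which is proper because
`d (p + 1) p > 0`. -/
def ProperBlock (μ : ℕ → ℕ) (i p : ℕ) : Prop :=
  1 ≤ i ∧ i ≤ p ∧ μ i < d (p + 1) i ∧ ∀ j, i < j → j ≤ p → μ j = d (p + 1) j

inductive BlockChain (μ : ℕ → ℕ) (a : ℕ) : ℕ → Prop
  | nil : BlockChain μ a a
  | cons {i p : ℕ} : a < i → ProperBlock d μ i p → BlockChain μ a (i - 1) → BlockChain μ a p

/-- A maximal block `d (b + 1)` on `[1, b]` followed by proper blocks up to `p`; `b = 0` encodes a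
decomposition whose first block is proper. -/
def Tiled (μ : ℕ → ℕ) (p : ℕ) : Prop :=
  ∃ b, (∀ j, 1 ≤ j → j ≤ b → μ j = d (b + 1) j) ∧ BlockChain d μ b p

variable {d} {μ ν : ℕ → ℕ} {a b p : ℕ}

lemma ProperBlock.unique {i i' : ℕ} (h : ProperBlock d μ i p) (h' : ProperBlock d μ i' p) :
    i = i' := by
  obtain ⟨-, hip, hi, hagree⟩ := h
  obtain ⟨-, hip', hi', hagree'⟩ := h'
  by_contra hne
  rcases Nat.lt_or_gt_of_ne hne with h | h
  · have := hagree i' h hip'; omega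
  · have := hagree' i h hip; omega

namespace BlockChain

lemma le (h : BlockChain d μ a p) : a ≤ p := by
  induction h with
  | nil => exact le_rfl
  | cons hai hblk _ _ => exact hai.le.trans hblk.2.1

lemma trans (h₁ : BlockChain d μ b p) (h₂ : BlockChain d μ a b) : BlockChain d μ a p := by
  induction h₁ with
  | nil => exact h₂
  | cons hbi hblk _ ih => exact cons (h₂.le.trans_lt hbi) hblk ih

lemma congr (h : BlockChain d μ a p) (he : ∀ j, a < j → j ≤ p → ν j = μ j) :
    BlockChain d ν a p := by
  induction h with
  | nil => exact nil
  | @cons i q hai hblk _ ih =>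
    obtain ⟨h1, hiq, hi, hagree⟩ := hblk
    refine cons hai ⟨h1, hiq, he i hai hiq ▸ hi, fun j hij hjq => ?_⟩ (ih fun j h₁ h₂ => ?_)
    · rw [he j (by omega) hjq]; exact hagree j hij hjq
    · exact he j h₁ (by omega)

lemma exists_top (h : BlockChain d μ a p) (hap : a < p) :
    ∃ i, a < i ∧ ProperBlock d μ i p ∧ BlockChain d μ a (i - 1) := by
  cases h with
  | nil => omega
  | cons hai hblk hch => exact ⟨_, hai, hblk, hch⟩

lemma exists_bottom (h : BlockChain d μ a p) (hap : a < p) :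
    ∃ n, ProperBlock d μ (a + 1) n ∧ BlockChain d μ n p := by
  induction h with
  | nil => omega
  | @cons i q hai hblk hch ih =>
    rcases (Nat.le_sub_one_of_lt hai).lt_or_eq with h | h
    · obtain ⟨n, hn, hnch⟩ := ih h
      exact ⟨n, hn, cons (by have := hnch.le; omega) hblk hnch⟩
    · exact ⟨q, by rwa [show a + 1 = i by have := hblk.1; omega], nil⟩

lemma exists_block_mem {q : ℕ} (h : BlockChain d μ a p) (haq : a < q) (hqp : q ≤ p) :
    ∃ i n, i ≤ q ∧ q ≤ n ∧ ProperBlock d μ i n ∧ BlockChain d μ n p := by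
  induction h with
  | nil => omega
  | @cons i p' hai hblk hch ih =>
    by_cases hiq : i ≤ q
    · exact ⟨i, p', hiq, hqp, hblk, nil⟩
    · obtain ⟨i₀, n, hi₀, hqn, hblk₀, hch₀⟩ := ih (by omega)
      exact ⟨i₀, n, hi₀, hqn, hblk₀, cons (by have := hch₀.le; omega) hblk hch₀⟩

/-- Block decompositions are unique: a tiling of `(a, p]` passes through the start of any tiling
of `(b, p]` with `a ≤ b`. -/
lemma cut (h₁ : BlockChain d μ a p) (h₂ : BlockChain d μ b p) (hab : a ≤ b) :
    BlockChain d μ a b := by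
  induction h₁ generalizing b with
  | nil => rw [le_antisymm h₂.le hab]; exact nil
  | @cons i q hai hblk hch ih =>
    rcases h₂.le.lt_or_eq with hbq | rfl
    · obtain ⟨i', -, hblk', hch'⟩ := h₂.exists_top hbq
      exact ih (hblk.unique hblk' ▸ hch') hab
    · exact cons hai hblk hch

end BlockChain

section Positivity

variable (hord : ∀ n, 2 ≤ n → d n (n - 1) ≠ 0 ∧ ∀ k, n - 1 < k → d n k = 0)
include hord

lemma d_succ_self_pos {p : ℕ} (hp : 1 ≤ p) : 0 < d (p + 1) p :=
  Nat.pos_of_ne_zero (by simpa using (hord (p + 1) (by omega)).1)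

lemma d_succ_eq_zero {m k : ℕ} (hm : 1 ≤ m) (hk : m < k) : d (m + 1) k = 0 :=
  (hord (m + 1) (by omega)).2 k (by omega)

lemma BlockChain.of_eq_zero (hap : a ≤ p) (hz : ∀ j, a < j → j ≤ p → μ j = 0) :
    BlockChain d μ a p := by
  induction p with
  | zero => exact (Nat.le_zero.1 hap) ▸ .nil
  | succ p ih =>
    rcases hap.lt_or_eq with h | rfl
    · refine .cons h ⟨by omega, le_rfl, ?_, fun j _ _ => by omega⟩ (ih (by omega) ?_)
      · rw [hz _ h le_rfl]; exact d_succ_self_pos hord (by omega)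
      · exact fun j h₁ h₂ => hz j h₁ (by omega)
    · exact .nil

/-- Blocks reaching into the zeros above the support of `μ` are singleton zero blocks, so a chain
can be cut or padded to end at any point above the support. -/
lemma BlockChain.adjust {P : ℕ} (h : BlockChain d μ a p) (hp : ∀ j, p < j → μ j = 0)
    (hP : ∀ j, P < j → μ j = 0) (haP : a ≤ P) : BlockChain d μ a P := by
  rcases le_total p P with hpP | hPp
  · exact (BlockChain.of_eq_zero hord hpP fun j h _ => hp j h).trans h
  induction h with
  | nil => rw [le_antisymm hPp haP]; exact .nil
  | @cons i q hai hblk hch ih =>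
    rcases hPp.lt_or_eq with hPq | rfl
    · obtain ⟨h1, hiq, -, hagree⟩ := hblk
      rcases hiq.lt_or_eq with hiq | rfl
      · have := hagree q hiq le_rfl
        have := d_succ_self_pos hord (p := q) (by omega)
        have := hP q hPq
        omega
      · exact ih (fun j hj => hP j (by omega)) (by omega)
    · exact .cons hai hblk hch

lemma Tiled.adjust {P : ℕ} (h : Tiled d μ p) (hp : ∀ j, p < j → μ j = 0)
    (hP : ∀ j, P < j → μ j = 0) : Tiled d μ P := by
  obtain ⟨b, hb, hch⟩ := h
  refine ⟨b, hb, hch.adjust hord hp hP ?_⟩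
  by_contra hbP
  have := hb b (by omega) le_rfl
  have := d_succ_self_pos hord (p := b) (by omega)
  have := hP b (by omega)
  omega

/-- Going down from `c`, the block either closes at the first nonzero entry of `d (n + 1)` or
becomes the maximal block. -/
lemma tiled_of_le_of_eq {c n : ℕ} (hc : 1 ≤ c) (hcn : c ≤ n)
    (hlow : ∀ j, 1 ≤ j → j < c → ν j = 0) (hle : ν c ≤ d (n + 1) c)
    (hagree : ∀ j, c < j → j ≤ n → ν j = d (n + 1) j) : Tiled d ν n := by
  induction c with
  | zero => omega
  | succ c ih =>
    rcases hle.lt_or_eq with hlt | heq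
    · exact ⟨0, fun j _ _ => by omega, .cons (by omega) ⟨hc, hcn, hlt, hagree⟩
        (BlockChain.of_eq_zero hord (by omega) fun j h₁ h₂ => hlow j h₁ (by omega))⟩
    rcases Nat.eq_zero_or_pos c with rfl | hc₀
    · refine ⟨n, fun j hj hjn => ?_, .nil⟩
      rcases hj.lt_or_eq with h | rfl
      · exact hagree j h hjn
      · exact heq
    · refine ih hc₀ (by omega) (fun j h₁ h₂ => hlow j h₁ (by omega)) ?_ fun j h₁ h₂ => ?_
      · rw [hlow c hc₀ (by omega)]; exact Nat.zero_le _
      · rcases (Nat.succ_le_of_lt h₁).lt_or_eq with h | h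
        · exact hagree j h h₂
        · rw [← h]; exact heq

lemma tiled_bump (hblk : ProperBlock d μ (b + 1) a) (hch : BlockChain d μ a p) :
    Tiled d (bump μ (b + 1)) p := by
  obtain ⟨-, hba, hlt, hagree⟩ := hblk
  obtain ⟨b', hb', hch'⟩ :=
    tiled_of_le_of_eq hord (ν := bump μ (b + 1)) (c := b + 1) le_add_self hba
    (fun j _ hj => bump_of_lt hj) (by rw [bump_self]; omega)
    (fun j h₁ h₂ => by rw [bump_of_gt h₁]; exact hagree j h₁ h₂)
  exact ⟨b', hb', (hch.congr fun j h _ => bump_of_gt (by omega)).trans hch'⟩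

end Positivity

end Tiling

namespace Tiled

variable {d : ℕ → ℕ → ℕ} {μ ν : ℕ → ℕ} {p : ℕ}

lemma congr (h : Tiled d μ p) (he : ∀ j, 1 ≤ j → j ≤ p → ν j = μ j) : Tiled d ν p := by
  obtain ⟨b, hb, hch⟩ := h
  exact ⟨b, fun j h₁ h₂ => (he j h₁ (h₂.trans hch.le)).trans (hb j h₁ h₂),
    hch.congr fun j h₁ h₂ => he j (by omega) h₂⟩

lemma of_blockChain {m : ℕ} (h : Tiled d μ p) (hch : BlockChain d μ m p) : Tiled d μ m := by
  obtain ⟨b, hb, hchb⟩ := h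
  rcases le_total b m with hbm | hmb
  · exact ⟨b, hb, hchb.cut hch hbm⟩
  rcases hmb.lt_or_eq with hmb | rfl
  · obtain ⟨i, hmi, ⟨-, hib, hi, -⟩, -⟩ := (hch.cut hchb hmb.le).exists_top hmb
    have := hb i (by omega) hib
    omega
  · exact ⟨m, hb, .nil⟩

/-- A tiling of `[1, p]` is lexicographically at most `d (p + 1)` there. -/
lemma le_of_agree {t : ℕ} (h : Tiled d μ p) (ht : 1 ≤ t) (htp : t ≤ p)
    (hagree : ∀ j, t < j → j ≤ p → μ j = d (p + 1) j) : μ t ≤ d (p + 1) t := by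
  obtain ⟨b, hb, hch⟩ := h
  rcases hch.le.lt_or_eq with hbp | rfl
  · obtain ⟨i, -, ⟨-, hip, hi, hagree'⟩, -⟩ := hch.exists_top hbp
    rcases lt_trichotomy i t with hit | rfl | hit
    · exact (hagree' t hit htp).le
    · exact hi.le
    · have := hagree i hit hip; omega
  · exact (hb t ht htp).le

lemma exists_block {q : ℕ} (h : Tiled d ν p) (hq : 1 ≤ q) (hqp : q ≤ p) :
    ∃ n, q ≤ n ∧ ν q ≤ d (n + 1) q ∧ (∀ j, q < j → j ≤ n → ν j = d (n + 1) j) ∧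
      BlockChain d ν n p := by
  obtain ⟨b, hb, hch⟩ := h
  by_cases hqb : q ≤ b
  · exact ⟨b, hqb, (hb q hq hqb).le, fun j h₁ h₂ => hb j (by omega) h₂, hch⟩
  obtain ⟨i, n, hiq, hqn, ⟨-, -, hi, hagree⟩, hchn⟩ := hch.exists_block_mem (by omega) hqp
  refine ⟨n, hqn, ?_, fun j h₁ h₂ => hagree j (by omega) h₂, hchn⟩
  rcases hiq.lt_or_eq with h | rfl
  · exact (hagree q h hqn).le
  · exact hi.le

/-- The block of the bump containing `q` becomes a proper block starting at `q`, on top of the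
maximal block `d q`. -/
lemma of_bump {σ : ℕ → ℕ} {q : ℕ} (h : Tiled d (bump σ q) p) (hq : 1 ≤ q) (hqp : q ≤ p)
    (hagree : ∀ j, 1 ≤ j → j < q → σ j = d q j) : Tiled d σ p := by
  obtain ⟨n, hqn, hle, hagree', hch⟩ := h.exists_block hq hqp
  rw [bump_self] at hle
  have hblk : ProperBlock d σ q n :=
    ⟨hq, hqn, by omega, fun j h₁ h₂ => by rw [← hagree' j h₁ h₂, bump_of_gt h₁]⟩
  refine ⟨q - 1, fun j h₁ h₂ => ?_, .trans ?_ (.cons (by omega) hblk .nil)⟩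
  · rw [Nat.sub_add_cancel hq]; exact hagree j h₁ (by omega)
  · exact hch.congr fun j h _ => (bump_of_gt (by omega)).symm

lemma le_sum {j : ℕ} (h : Tiled d μ p) (hj : 1 ≤ j) (hjp : j ≤ p) :
    μ j ≤ ∑ n ∈ range (p + 2), d n j := by
  obtain ⟨n, -, hle, -, hch⟩ := h.exists_block hj hjp
  exact hle.trans (single_le_sum (f := fun n => d n j) (fun _ _ => Nat.zero_le _)
    (mem_range.2 (by have := hch.le; omega)))

end Tiled

section Decomposition

variable {d : ℕ → ℕ → ℕ} {μ ν : ℕ → ℕ} {p : ℕ}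

lemma IsProperBlockAt.bounds {ζ : ℕ → ℕ} {i n : ℕ} (h : IsProperBlockAt d ζ i n) :
    1 ≤ i ∧ i ≤ n := by
  rcases h with ⟨-, rfl, h⟩ | ⟨h₁, h₂, -⟩
  exacts [⟨h, le_rfl⟩, ⟨h₁, h₂⟩]

lemma IsProperBlockAt.eq_zero {ζ : ℕ → ℕ} {i n s : ℕ} (h : IsProperBlockAt d ζ i n)
    (hs : s < i ∨ n < s) : ζ s = 0 := by
  rcases h with ⟨h, -⟩ | ⟨-, -, -, -, h⟩
  exacts [h s, h s hs]

lemma IsBlockDecomp.append {M q : ℕ} {ζ : ℕ → ℕ → ℕ} {I N : ℕ → ℕ} {η : ℕ → ℕ}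
    (h : IsBlockDecomp d ν M ζ I N) (hη : IsProperBlockAt d η (N M + 1) q) :
    IsBlockDecomp d (fun k => ν k + η k) (M + 1) (Function.update ζ (M + 1) η)
      (Function.update I (M + 1) (N M + 1)) (Function.update N (M + 1) q) := by
  obtain ⟨hM, hI, hfirst, hblocks, hcons, hsum⟩ := h
  have h1 : (1 : ℕ) ≠ M + 1 := by omega
  refine ⟨by omega, by rwa [Function.update_of_ne h1], ?_, fun m hm₁ hm₂ => ?_,
    fun m hm₁ hm₂ => ?_, fun k => ?_⟩
  · rwa [Function.update_of_ne h1, Function.update_of_ne h1, Function.update_of_ne h1]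
  · rcases hm₂.lt_or_eq with hm | rfl
    · simpa [hm.ne] using hblocks m hm₁ (by omega)
    · simpa using hη
  · rcases (Nat.lt_succ_iff.1 hm₂).lt_or_eq with hm | rfl
    · rw [Function.update_of_ne (by omega), Function.update_of_ne (by omega)]
      exact hcons m hm₁ hm
    · simp
  · show ν k + η k = _
    rw [sum_Icc_succ_top (by omega), hsum k, Function.update_self]
    congr 1
    exact sum_congr rfl fun m hm => by
      rw [Function.update_of_ne (by simp at hm; omega)]

variable (h0 : ∀ n, 2 ≤ n → d n 0 = 0)
  (hord : ∀ n, 2 ≤ n → d n (n - 1) ≠ 0 ∧ ∀ k, n - 1 < k → d n k = 0)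

include hord in
lemma IsProperBlockAt.properBlock {ζ : ℕ → ℕ} {i n : ℕ} (h : IsProperBlockAt d ζ i n)
    (he : ∀ j, i ≤ j → j ≤ n → μ j = ζ j) : ProperBlock d μ i n := by
  rcases h with ⟨hz, rfl, hi⟩ | ⟨h₁, h₂, hlt, hagree, -⟩
  · exact ⟨hi, le_rfl, by rw [he i le_rfl le_rfl, hz]; exact d_succ_self_pos hord hi,
      fun j h₁ h₂ => by omega⟩
  · exact ⟨h₁, h₂, he i le_rfl h₂ ▸ hlt,
      fun j hj₁ hj₂ => (he j hj₁.le hj₂).trans (hagree j hj₁ hj₂)⟩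

include h0 hord in
lemma tiled_of_isBlockDecomp {M : ℕ} {ζ : ℕ → ℕ → ℕ} {I N : ℕ → ℕ}
    (h : IsBlockDecomp d μ M ζ I N) :
    μ 0 = 0 ∧ (∀ k, N M < k → μ k = 0) ∧ Tiled d μ (N M) := by
  obtain hM := h.1
  induction M, hM using Nat.le_induction generalizing μ with
  | base =>
    obtain ⟨-, hI, hfirst, -, -, hsum⟩ := h
    simp only [Icc_self, sum_singleton] at hsum
    rw [funext hsum]
    rcases hfirst with hprop | ⟨hN, hζ⟩
    · refine ⟨hprop.eq_zero (by omega), fun k hk => hprop.eq_zero (by omega),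
        0, fun j _ _ => by omega, .cons (by omega) (hprop.properBlock hord fun _ _ _ => rfl) ?_⟩
      rw [hI]; exact .nil
    · rw [hζ]
      exact ⟨h0 _ (by omega), fun k hk => d_succ_eq_zero hord hN hk, N 1, fun _ _ _ => rfl, .nil⟩
  | succ M hM ih =>
    obtain ⟨-, hI, hfirst, hblocks, hcons, hsum⟩ := h
    obtain ⟨hμ0, hμz, hμt⟩ := ih (μ := fun k => ∑ m ∈ Icc 1 M, ζ m k)
      ⟨hM, hI, hfirst, fun m h₁ h₂ => hblocks m h₁ (by omega),
        fun m h₁ h₂ => hcons m h₁ (by omega), fun _ => rfl⟩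
    have hlast := hblocks (M + 1) (by omega) le_rfl
    have hIM := hcons M hM M.lt_succ_self
    have hNM := hlast.bounds
    have hsplit : ∀ k, μ k = (∑ m ∈ Icc 1 M, ζ m k) + ζ (M + 1) k := fun k => by
      rw [hsum k, sum_Icc_succ_top (by omega)]
    refine ⟨by rw [hsplit, hμ0, hlast.eq_zero (by omega)], fun k hk => ?_, ?_⟩
    · rw [hsplit, hμz k (by omega), hlast.eq_zero (by omega)]
    · obtain ⟨b, hb, hch⟩ := hμt.congr (ν := μ) fun j _ hj => by
        rw [hsplit, hlast.eq_zero (by omega)]; rfl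
      refine ⟨b, hb, .cons (by have := hch.le; omega) (hlast.properBlock hord fun j h₁ h₂ => ?_) ?_⟩
      · rw [hsplit, hμz j (by omega), zero_add]
      · rwa [hIM, Nat.add_sub_cancel]

include h0 hord in
lemma exists_isBlockDecomp_of_blockChain {b : ℕ} (hμ0 : μ 0 = 0)
    (hb : ∀ j, 1 ≤ j → j ≤ b → μ j = d (b + 1) j) (hch : BlockChain d μ b p) :
    b = 0 ∧ p = 0 ∨ ∃ M ζ I N, IsBlockDecomp d (fun k => if k ≤ p then μ k else 0) M ζ I N ∧
      N M = p := by
  induction hch with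
  | nil =>
    rcases Nat.eq_zero_or_pos b with rfl | hb1
    · exact Or.inl ⟨rfl, rfl⟩
    refine Or.inr ⟨1, fun _ => d (b + 1), fun _ => 1, fun _ => b,
      ⟨le_rfl, rfl, Or.inr ⟨hb1, rfl⟩, fun m h₁ h₂ => by omega, fun m h₁ h₂ => by omega,
        fun k => ?_⟩, rfl⟩
    simp only [Icc_self, sum_singleton]
    split_ifs with hk
    · rcases Nat.eq_zero_or_pos k with rfl | hk0
      · rw [hμ0, h0 _ (by omega)]
      · exact hb k hk0 hk
    · exact (d_succ_eq_zero hord hb1 (by omega)).symm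
  | @cons i q hbi hblk hch ih =>
    obtain ⟨hi1, hiq, hlt, hagree⟩ := hblk
    set η : ℕ → ℕ := fun k => if i ≤ k ∧ k ≤ q then μ k else 0
    have hη : ∀ {i'}, i' = i → IsProperBlockAt d η i' q := by
      rintro _ rfl
      exact Or.inr ⟨hi1, hiq, by simpa [η, hiq] using hlt,
        fun j h₁ h₂ => by simpa [η, h₁.le, h₂] using hagree j h₁ h₂,
        fun s hs => by simp only [η]; split_ifs <;> omega⟩
    refine Or.inr ?_
    rcases ih with ⟨rfl, hi⟩ | ⟨M, ζ, I, N, hdec, hNM⟩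
    · refine ⟨1, fun _ => η, fun _ => 1, fun _ => q,
        ⟨le_rfl, rfl, Or.inl (hη (i' := 1) (by omega)), fun m h₁ h₂ => by omega,
          fun m h₁ h₂ => by omega, fun k => ?_⟩, rfl⟩
      simp only [Icc_self, sum_singleton, η]
      split_ifs <;> first | rfl | (obtain rfl : k = 0 := by omega); simp [hμ0]
    · refine ⟨M + 1, Function.update ζ (M + 1) η, Function.update I (M + 1) (N M + 1),
        Function.update N (M + 1) q, ?_, Function.update_self _ _ _⟩
      convert hdec.append (hη (by omega)) using 1
      funext k
      simp only [η]
      split_ifs <;> omega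

include h0 hord in
theorem DeterminedCollection.mem_iff_tiled :
    μ ∈ DeterminedCollection d ↔ μ 0 = 0 ∧ ∃ p, (∀ j, p < j → μ j = 0) ∧ Tiled d μ p := by
  constructor
  · rintro ⟨M, ζ, I, N, h⟩
    obtain ⟨hμ0, hz, ht⟩ := tiled_of_isBlockDecomp h0 hord h
    exact ⟨hμ0, N M, hz, ht⟩
  · rintro ⟨hμ0, p, hz, b, hb, hch⟩
    have htrunc : (fun k => if k ≤ p then μ k else 0) = μ := by
      funext k
      split_ifs with hk
      · rfl
      · exact (hz k (by omega)).symm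
    rcases exists_isBlockDecomp_of_blockChain h0 hord hμ0 hb hch with
      ⟨rfl, rfl⟩ | ⟨M, ζ, I, N, h, -⟩
    · refine ⟨1, fun _ _ => 0, fun _ => 1, fun _ => 1, le_rfl, rfl,
        Or.inl (Or.inl ⟨fun _ => rfl, rfl, le_rfl⟩), fun m h₁ h₂ => by omega,
        fun m h₁ h₂ => by omega, fun k => ?_⟩
      rcases Nat.eq_zero_or_pos k with rfl | hk
      · simpa using hμ0
      · simpa using hz k hk
    · exact ⟨M, ζ, I, N, htrunc ▸ h⟩

end Decomposition

namespace DeterminedCollection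

section Membership

variable {d : ℕ → ℕ → ℕ} (h0 : ∀ n, 2 ≤ n → d n 0 = 0)
  (hord : ∀ n, 2 ≤ n → d n (n - 1) ≠ 0 ∧ ∀ k, n - 1 < k → d n k = 0)
include h0 hord

variable {μ σ : ℕ → ℕ} {p : ℕ}

lemma tiled_of_mem (hμ : μ ∈ DeterminedCollection d) (hp : ∀ j, p < j → μ j = 0) :
    Tiled d μ p := by
  obtain ⟨-, P, hP, ht⟩ := (mem_iff_tiled h0 hord).1 hμ
  exact ht.adjust hord hP hp

lemma mem_of_tiled (hμ0 : μ 0 = 0) (hp : ∀ j, p < j → μ j = 0) (ht : Tiled d μ p) :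
    μ ∈ DeterminedCollection d :=
  (mem_iff_tiled h0 hord).2 ⟨hμ0, p, hp, ht⟩

lemma finSupp_of_mem (hμ : μ ∈ DeterminedCollection d) : FinSupp μ := by
  obtain ⟨-, P, hP, -⟩ := (mem_iff_tiled h0 hord).1 hμ
  exact finSupp_of_bound hP

lemma d_mem {n : ℕ} (hn : 2 ≤ n) : d n ∈ DeterminedCollection d := by
  refine mem_of_tiled h0 hord (h0 n hn) (hord n hn).2 ⟨n - 1, fun j _ _ => ?_, .nil⟩
  rw [Nat.sub_add_cancel (by omega)]

lemma isCollection : IsCollection (DeterminedCollection d) := by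
  refine ⟨fun μ hμ => ⟨((mem_iff_tiled h0 hord).1 hμ).1, finSupp_of_mem h0 hord hμ⟩,
    mem_of_tiled h0 hord (p := 0) rfl (fun _ _ => rfl) ⟨0, fun j _ _ => by omega, .nil⟩,
    fun i hi => mem_of_tiled h0 hord (p := i) (beta_of_ne (by omega))
      (fun j hj => beta_of_ne (by omega)) ?_⟩
  refine tiled_of_le_of_eq hord hi le_rfl (fun j _ hj => beta_of_ne (by omega)) ?_
    fun j h₁ h₂ => by omega
  rw [beta_self]; exact d_succ_self_pos hord hi

theorem isImmPred_beta {n : ℕ} (hn : 2 ≤ n) :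
    IsImmPred (DeterminedCollection d) (beta n) (d n) := by
  refine ⟨d_mem h0 hord hn, ascLt_beta_iff.2 fun j hj => (hord n hn).2 j (by omega),
    fun σ hσ hlt => ?_⟩
  have hz := ascLt_beta_iff.1 hlt
  rcases ascLt_trichotomy (finSupp_of_mem h0 hord hσ) (finSupp_of_mem h0 hord (d_mem h0 hord hn))
    with h | h | ⟨k, hk, hagree⟩
  · exact Or.inl h
  · exact Or.inr h
  have hk₀ : k ≠ 0 := by
    rintro rfl
    rw [h0 n hn, ((mem_iff_tiled h0 hord).1 hσ).1] at hk
    omega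
  have hkn : k ≤ n - 1 := by
    by_contra h
    rw [hz k (by omega)] at hk
    omega
  have := (tiled_of_mem h0 hord hσ fun j hj => hz j (by omega)).le_of_agree (by omega) hkn
    fun j h₁ _ => by rw [Nat.sub_add_cancel (by omega)]; exact (hagree j h₁).symm
  rw [Nat.sub_add_cancel (by omega)] at this
  omega

/-- `K - 1` is the end of the maximal block of `μ`. No member above `μ` can differ from it first
inside that block, which is lexicographically maximal, and the least function above `μ` that only
changes indices `≥ K` is the bump. -/
theorem exists_isImmSucc_bump (hμ : μ ∈ DeterminedCollection d) :
    ∃ K, 1 ≤ K ∧ (∀ j, 1 ≤ j → j < K → μ j = d K j) ∧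
      IsImmSucc (DeterminedCollection d) μ (bump μ K) := by
  obtain ⟨hμ0, p, hz, b, hb, hch⟩ := (mem_iff_tiled h0 hord).1 hμ
  have hbp := hch.le
  obtain ⟨n, hblk, hchn⟩ :=
    (hch.adjust hord hz (P := p + 1) (fun j hj => hz j (by omega)) (by omega)).exists_bottom
      (by omega)
  refine ⟨b + 1, by omega, fun j h₁ h₂ => hb j h₁ (by omega),
    mem_of_tiled h0 hord (bump_of_lt (by omega))
      (fun j hj => by rw [bump_of_gt (by omega)]; exact hz j (by omega))
      (tiled_bump hord hblk hchn),
    ascLt_bump, fun σ hσ ⟨t, ht, hagree⟩ => ?_⟩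
  refine eq_bump_or_bump_ascLt (finSupp_of_mem h0 hord hμ) (finSupp_of_mem h0 hord hσ) ht hagree ?_
  by_contra! htb
  have ht₀ : t ≠ 0 := by
    rintro rfl
    rw [hμ0, ((mem_iff_tiled h0 hord).1 hσ).1] at ht
    omega
  have hσz : ∀ j, p < j → σ j = 0 := fun j hj => by rw [← hagree j (by omega)]; exact hz j hj
  have hσb : Tiled d σ b := (tiled_of_mem h0 hord hσ hσz).of_blockChain
    (hch.congr fun j h₁ _ => (hagree j (by omega)).symm)
  have := hσb.le_of_agree (t := t) (by omega) (by omega) fun j h₁ h₂ => by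
    rw [← hagree j h₁]; exact hb j (by omega) h₂
  have := hb t (by omega) (by omega)
  omega

theorem finite_setOf_ascLt (hμ : μ ∈ DeterminedCollection d) :
    {σ | σ ∈ DeterminedCollection d ∧ AscLt σ μ}.Finite := by
  obtain ⟨-, T, hT, -⟩ := (mem_iff_tiled h0 hord).1 hμ
  set S := {σ | σ ∈ DeterminedCollection d ∧ AscLt σ μ}
  have hzero : ∀ σ ∈ S, ∀ j, T < j → σ j = 0 := by
    rintro σ ⟨-, k, hk, hagree⟩ j hj
    have hkT : k ≤ T := by
      by_contra h
      rw [hT k (by omega)] at hk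
      omega
    rw [hagree j (by omega), hT j hj]
  have hbound : ∀ σ ∈ S, ∀ j, σ j ≤ ∑ n ∈ range (T + 2), d n j := by
    intro σ hσ j
    rcases Nat.eq_zero_or_pos j with rfl | hj
    · rw [((mem_iff_tiled h0 hord).1 hσ.1).1]; exact Nat.zero_le _
    by_cases hjT : j ≤ T
    · exact (tiled_of_mem h0 hord hσ.1 (hzero σ hσ)).le_sum hj hjT
    · rw [hzero σ hσ j (by omega)]; exact Nat.zero_le _
  refine Set.Finite.of_finite_image (f := fun σ (j : Fin (T + 1)) => σ j) ?_ ?_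
  · exact (Set.Finite.pi fun j : Fin (T + 1) => Set.finite_Iic (∑ n ∈ range (T + 2), d n j)).subset
      (by rintro _ ⟨σ, hσ, rfl⟩ j -; exact hbound σ hσ j)
  · intro σ hσ τ hτ h
    funext j
    by_cases hj : j ≤ T
    · exact congrFun h ⟨j, by omega⟩
    · rw [hzero σ hσ j (by omega), hzero τ hτ j (by omega)]

theorem isZeckendorf : IsZeckendorf (DeterminedCollection d) := by
  refine ⟨isCollection h0 hord, fun μ hμ => finite_setOf_ascLt h0 hord hμ,
    fun μ hμ => ?_⟩
  obtain ⟨K, hK, hagree, hsucc⟩ := exists_isImmSucc_bump h0 hord hμ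
  refine ⟨bump μ K, hsucc, ?_⟩
  rcases hK.lt_or_eq with hK | rfl
  · exact Or.inr ⟨K, hK, d K, isImmPred_beta h0 hord hK, hagree, rfl⟩
  · exact Or.inl (bump_one_eq ((mem_iff_tiled h0 hord).1 hμ).1)

lemma mem_of_bump_mem {q : ℕ} (hμ0 : μ 0 = 0) (hq : 1 ≤ q)
    (hagree : ∀ j, 1 ≤ j → j < q → μ j = d q j) (h : bump μ q ∈ DeterminedCollection d) :
    μ ∈ DeterminedCollection d := by
  obtain ⟨-, p, hz, ht⟩ := (mem_iff_tiled h0 hord).1 h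
  have hqp : q ≤ p := by
    by_contra h
    have := hz q (by omega)
    rw [bump_self] at this
    omega
  refine mem_of_tiled h0 hord hμ0 (fun j hj => ?_) (ht.of_bump hq hqp hagree)
  rw [← hz j hj, bump_of_gt (by omega)]

end Membership

section Uniqueness

variable {d : ℕ → ℕ → ℕ} (h0 : ∀ n, 2 ≤ n → d n 0 = 0)
  (hord : ∀ n, 2 ≤ n → d n (n - 1) ≠ 0 ∧ ∀ k, n - 1 < k → d n k = 0)
  {F : Set (ℕ → ℕ)} (hF : IsZeckendorf F) (hFpred : ∀ n, 2 ≤ n → IsImmPred F (beta n) (d n))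
include h0 hord hF hFpred

/-- Going down from `y` through immediate predecessors in `F` undoes bumps, which keeps us inside
the determined collection. -/
lemma mem_of_le {x y : ℕ → ℕ} (hx : x ∈ F) (hy : y ∈ F)
    (hyE : y ∈ DeterminedCollection d) (hxy : x = y ∨ AscLt x y) :
    x ∈ DeterminedCollection d := by
  obtain ⟨k, hk⟩ : ∃ k, ascRank F y = k := ⟨_, rfl⟩
  induction k using Nat.strong_induction_on generalizing y with
  | _ k ih =>
    rcases hxy with rfl | hxy
    · exact hyE
    obtain ⟨p, hp⟩ := hF.exists_isImmPred hy (by rintro rfl; exact not_ascLt_zero hxy)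
    obtain ⟨q, hq, hagree, rfl⟩ :=
      hF.exists_eq_bump hFpred hp.1 (hF.isImmSucc_of_isImmPred hy hp)
    exact ih _ (by rw [← hk, hF.ascRank_eq_succ hp]; omega) hp.1
      (mem_of_bump_mem h0 hord (hF.1.1 p hp.1).1 hq hagree hyE) (hp.2.2 x hx hxy) rfl

lemma subset_of_isZeckendorf : F ⊆ DeterminedCollection d := by
  intro x hx
  obtain ⟨B, hB⟩ := (hF.finSupp hx).exists_bound
  have hN := hord (B + 2) (by omega)
  refine mem_of_le h0 hord hF hFpred hx (hFpred (B + 2) (by omega)).1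
    (d_mem h0 hord (by omega)) (Or.inr ⟨B + 1, ?_, fun j hj => ?_⟩)
  · rw [hB _ (by omega)]; exact Nat.pos_of_ne_zero hN.1
  · rw [hB j (by omega), hN.2 j (by omega)]

/-- Both collections put `β^m` at the same rank `weight d m`, so below `β^m` the inclusion
`F ⊆ DeterminedCollection d` is an equality of finite sets of the same size. -/
theorem eq_of_isZeckendorf : F = DeterminedCollection d := by
  have hE := isZeckendorf h0 hord
  have hsub := subset_of_isZeckendorf h0 hord hF hFpred
  refine hsub.antisymm fun σ hσ => ?_
  obtain ⟨B, hB⟩ := (hE.finSupp hσ).exists_bound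
  have hbeta : ∀ {G}, IsZeckendorf G → (∀ n, 2 ≤ n → IsImmPred G (beta n) (d n)) →
      ascRank G (beta (B + 1)) = weight d (B + 1) := fun hG hGpred => by
    rw [hG.ascRank_eq_weightedSum hGpred (hG.1.2.2 _ le_add_self), weightedSum_beta]
  have hbelow : {τ | τ ∈ F ∧ AscLt τ (beta (B + 1))} =
      {τ | τ ∈ DeterminedCollection d ∧ AscLt τ (beta (B + 1))} :=
    Set.eq_of_subset_of_ncard_le (fun τ hτ => ⟨hsub hτ.1, hτ.2⟩)
      (by rw [← ascRank, ← ascRank, hbeta hF hFpred,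
        hbeta hE fun n hn => isImmPred_beta h0 hord hn])
      (hE.2.1 _ (hE.1.2.2 _ le_add_self))
  have hσβ : σ ∈ {τ | τ ∈ DeterminedCollection d ∧ AscLt τ (beta (B + 1))} :=
    ⟨hσ, ascLt_beta_iff.2 fun j hj => hB j (by omega)⟩
  exact (hbelow ▸ hσβ).1

end Uniqueness

end DeterminedCollection

/-- The collection determined by a family `d n` (of finite-support coefficient
functions with order `n - 1`, for `n ≥ 2`) is the unique Zeckendorf collection
for positive integers whose immediate predecessor of `β^n` is `d n`. -/
theorem determined_collection_zeckendorf (d : ℕ → ℕ → ℕ)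
    (h0 : ∀ n, 2 ≤ n → d n 0 = 0)
    (hord : ∀ n, 2 ≤ n → d n (n - 1) ≠ 0 ∧ ∀ k, n - 1 < k → d n k = 0) :
    IsZeckendorf (DeterminedCollection d) ∧
    (∀ n, 2 ≤ n → IsImmPred (DeterminedCollection d) (beta n) (d n)) ∧
    ∀ F : Set (ℕ → ℕ), IsZeckendorf F → (∀ n, 2 ≤ n → IsImmPred F (beta n) (d n)) →
      F = DeterminedCollection d :=
  ⟨DeterminedCollection.isZeckendorf h0 hord,
    fun _ hn => DeterminedCollection.isImmPred_beta h0 hord hn,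
    fun _ hF hFpred => DeterminedCollection.eq_of_isZeckendorf h0 hord hF hFpred⟩
end

section
/- Let 𝓔 be any set of finite-support coefficient functions containing the zero function and every basis function β^i. If Q and Z are strictly increasing sequences of positive integers that both have the unique 𝓔-representation property and satisfy X_Q = X_Z, then Q_n = Z_n for all n ≥ 1. In other words, every increasing 𝓔-subset of the positive integers has a unique increasing fundamental sequence. -/
lemma mono_of_step (Z : ℕ → ℕ) (h : ∀ k, 1 ≤ k → Z k < Z (k + 1)) :
    ∀ a b, 1 ≤ a → a ≤ b → Z a ≤ Z b := by
  intro a b ha hab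
  induction b with
  | zero => omega
  | succ m ih =>
    rcases Nat.lt_or_ge a (m + 1) with hlt | hge
    · exact le_trans (ih (by omega)) (le_of_lt (h m (by omega)))
    · have : a = m + 1 := by omega
      subst this; rfl

lemma finsum_beta_mul (n : ℕ) (Q : ℕ → ℕ) : ∑ᶠ k, beta n k * Q k = Q n := by
  have h : ∀ k, k ≠ n → beta n k * Q k = 0 := by
    intro k hk; simp [beta, hk]
  rw [finsum_eq_single _ n h]
  simp [beta]

lemma beta_ne_zero (n : ℕ) : beta n ≠ 0 := by
  intro h
  have := congrFun h n
  simp [beta] at this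

lemma aux_not_lt (E : Set (ℕ → ℕ)) (hcoll : IsCollection E) (Q Z : ℕ → ℕ)
    (hZmono : ∀ k, 1 ≤ k → Z k < Z (k + 1))
    (hQuniq : Set.InjOn (fun ε : ℕ → ℕ => ∑ᶠ k, ε k * Q k) E)
    (hsub : (fun ε : ℕ → ℕ => ∑ᶠ k, ε k * Q k) '' (E \ {0}) ⊆
            (fun ε : ℕ → ℕ => ∑ᶠ k, ε k * Z k) '' (E \ {0}))
    (n : ℕ) (hn : 1 ≤ n) (IH : ∀ j, 1 ≤ j → j < n → Q j = Z j) :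
    ¬ Q n < Z n := by
  intro hlt
  obtain ⟨hE0, hzero, hbeta⟩ := hcoll
  have hbn : beta n ∈ E \ {0} := ⟨hbeta n hn, beta_ne_zero n⟩
  have hmem : Q n ∈ (fun ε : ℕ → ℕ => ∑ᶠ k, ε k * Q k) '' (E \ {0}) :=
    ⟨beta n, hbn, finsum_beta_mul n Q⟩
  obtain ⟨ε, hεE, hεsum⟩ := hsub hmem
  simp only at hεsum
  have hεfin : (Function.support ε).Finite := (hE0 ε hεE.1).2
  have hε0 : ε 0 = 0 := (hE0 ε hεE.1).1
  -- support of ε lies strictly below n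
  have hsupp : ∀ j, ε j ≠ 0 → 1 ≤ j ∧ j < n := by
    intro j hj
    have hj1 : 1 ≤ j := by
      rcases Nat.eq_zero_or_pos j with h0 | h1
      · exact absurd (h0 ▸ hε0) hj
      · exact h1
    refine ⟨hj1, ?_⟩
    by_contra hge
    push_neg at hge
    have hfin : (Function.support fun k => ε k * Z k).Finite := by
      apply hεfin.subset
      intro k hk
      simp only [Function.mem_support] at hk ⊢
      intro h0; apply hk; rw [h0, zero_mul]
    have hle : ε j * Z j ≤ ∑ᶠ k, ε k * Z k :=
      single_le_finsum j hfin (fun k => Nat.zero_le _)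
    have hZj : Z n ≤ Z j := mono_of_step Z hZmono n j hn hge
    have : Z n ≤ ε j * Z j :=
      le_trans hZj (Nat.le_mul_of_pos_left _ (Nat.pos_of_ne_zero hj))
    omega
  have hQZ : ∑ᶠ k, ε k * Z k = ∑ᶠ k, ε k * Q k := by
    apply finsum_congr
    intro k
    rcases Nat.eq_zero_or_pos (ε k) with h0 | hpos
    · rw [h0, zero_mul, zero_mul]
    · obtain ⟨h1, h2⟩ := hsupp k (Nat.pos_iff_ne_zero.mp hpos)
      rw [IH k h1 h2]
  have heq : (fun ε : ℕ → ℕ => ∑ᶠ k, ε k * Q k) ε =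
      (fun ε : ℕ → ℕ => ∑ᶠ k, ε k * Q k) (beta n) := by
    simp only [finsum_beta_mul]
    rw [← hQZ, hεsum]
  have := hQuniq hεE.1 (hbeta n hn) heq
  have hεn : ε n = 0 := by
    by_contra h
    exact absurd (hsupp n h).2 (lt_irrefl n)
  have : ε n = beta n n := congrFun this n
  simp [beta, hεn] at this

/-- The weak converse for subsets of the positive integers: an increasing
`𝓔`-subset of `ℕ` has at most one increasing fundamental sequence, for any
collection `𝓔` of finite-support coefficient functions containing the zero
function and the basis functions. -/
theorem unique_increasing_fundamental_sequence (E : Set (ℕ → ℕ))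
    (hcoll : IsCollection E) (Q Z : ℕ → ℕ)
    (hQpos : ∀ k, 1 ≤ k → 0 < Q k) (hZpos : ∀ k, 1 ≤ k → 0 < Z k)
    (hQmono : ∀ k, 1 ≤ k → Q k < Q (k + 1))
    (hZmono : ∀ k, 1 ≤ k → Z k < Z (k + 1))
    (hQuniq : Set.InjOn (fun ε : ℕ → ℕ => ∑ᶠ k, ε k * Q k) E)
    (hZuniq : Set.InjOn (fun ε : ℕ → ℕ => ∑ᶠ k, ε k * Z k) E)
    (hXQZ : (fun ε : ℕ → ℕ => ∑ᶠ k, ε k * Q k) '' (E \ {0}) =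
            (fun ε : ℕ → ℕ => ∑ᶠ k, ε k * Z k) '' (E \ {0})) :
    ∀ n, 1 ≤ n → Q n = Z n := by
  intro n
  induction n using Nat.strong_induction_on with
  | _ n IH =>
    intro hn
    have IH' : ∀ j, 1 ≤ j → j < n → Q j = Z j := fun j hj1 hj2 => IH j hj2 hj1
    have h1 : ¬ Q n < Z n :=
      aux_not_lt E hcoll Q Z hZmono hQuniq (hXQZ ▸ subset_rfl) n hn IH'
    have h2 : ¬ Z n < Q n :=
      aux_not_lt E hcoll Z Q hQmono hZuniq (hXQZ ▸ subset_rfl) n hn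
        (fun j hj1 hj2 => (IH' j hj1 hj2).symm)
    omega
end

section
/- Let N ≥ 1, let b ≥ 0 be an integer, and let e_1, …, e_N be nonnegative integers with e_1 ≥ 1. Define coefficient functions β̂^n by β̂^n = Σ_{k=1}^{n−1} e_k β^{n−k} for 2 ≤ n ≤ N+1, and β̂^n = Σ_{k=1}^{n−N−1} b β^k + Σ_{k=1}^N e_k β^{n−k} for n ≥ N+2. Suppose Q : {1,2,…} → ℕ satisfies Q_1 = 1 and Q_n = 1 + Σ_k β̂^n_k Q_k for all n ≥ 2. Then for all n ≥ N+2, the identity Q_n = (e_1 + 1) Q_{n−1} + Σ_{k=2}^N (e_k − e_{k−1}) Q_{n−k} + (b − e_N) Q_{n−N−1} holds in the integers. -/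
/-! Both recurrences share the form `Q n = 1 + Σ_{k ≤ n-N-1} b Q k + Σ_{k=1}^N e k Q (n-k)`
for `n ≥ N + 1`. Subtracting this at `n - 1` from it at `n`, the `b`-sums differ by the single
term `b Q (n-N-1)`, and the difference of the `e`-sums is rearranged by summation by parts. -/

open Finset

theorem Finset.sum_Icc_mul_sub_sum_Icc_mul_succ {R : Type*} [CommRing R] (e g : ℕ → R)
    {N : ℕ} (hN : 1 ≤ N) :
    ∑ k ∈ Icc 1 N, e k * g k - ∑ k ∈ Icc 1 N, e k * g (k + 1) =
      e 1 * g 1 + ∑ k ∈ Icc 2 N, (e k - e (k - 1)) * g k - e N * g (N + 1) := by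
  induction N, hN using Nat.le_induction with
  | base => simp
  | succ N hN ih =>
    rw [sum_Icc_succ_top (by omega), sum_Icc_succ_top (by omega),
      sum_Icc_succ_top (by omega : 2 ≤ N + 1), Nat.add_sub_cancel]
    linear_combination ih

theorem tail_recurrence {N b : ℕ} {e Q : ℕ → ℕ}
    (hrec1 : ∀ n, 2 ≤ n → n ≤ N + 1 →
      Q n = 1 + ∑ k ∈ Icc 1 (n - 1), e k * Q (n - k))
    (hrec2 : ∀ n, N + 2 ≤ n →
      Q n = 1 + (∑ k ∈ Icc 1 (n - N - 1), b * Q k) + ∑ k ∈ Icc 1 N, e k * Q (n - k))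
    (hN : 1 ≤ N) {n : ℕ} (hn : N + 1 ≤ n) :
    Q n = 1 + (∑ k ∈ Icc 1 (n - N - 1), b * Q k) + ∑ k ∈ Icc 1 N, e k * Q (n - k) := by
  rcases hn.eq_or_lt with rfl | hn
  · simpa using hrec1 (N + 1) (by omega) le_rfl
  · exact hrec2 n hn

theorem short_recurrence_with_negative_coefficients_general (N : ℕ) (hN : 1 ≤ N)
    (b : ℕ) (e : ℕ → ℕ) (Q : ℕ → ℕ)
    (hrec1 : ∀ n, 2 ≤ n → n ≤ N + 1 →
      Q n = 1 + ∑ k ∈ Finset.Icc 1 (n - 1), e k * Q (n - k))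
    (hrec2 : ∀ n, N + 2 ≤ n →
      Q n = 1 + (∑ k ∈ Finset.Icc 1 (n - N - 1), b * Q k) +
        ∑ k ∈ Finset.Icc 1 N, e k * Q (n - k)) :
    ∀ n, N + 2 ≤ n →
      (Q n : ℤ) = ((e 1 : ℤ) + 1) * Q (n - 1) +
        (∑ k ∈ Finset.Icc 2 N, ((e k : ℤ) - (e (k - 1) : ℤ)) * Q (n - k)) +
        ((b : ℤ) - (e N : ℤ)) * Q (n - N - 1) := by
  intro n hn
  obtain ⟨m, rfl⟩ : ∃ m, n = m + 1 := ⟨n - 1, by omega⟩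
  have hsucc : (Q (m + 1) : ℤ) = 1 + (∑ k ∈ Icc 1 (m + 1 - N - 1), (b : ℤ) * Q k) +
      ∑ k ∈ Icc 1 N, (e k : ℤ) * Q (m + 1 - k) := by
    exact_mod_cast tail_recurrence hrec1 hrec2 hN (n := m + 1) (by omega)
  have hprev : (Q m : ℤ) = 1 + (∑ k ∈ Icc 1 (m - N - 1), (b : ℤ) * Q k) +
      ∑ k ∈ Icc 1 N, (e k : ℤ) * Q (m - k) := by
    exact_mod_cast tail_recurrence hrec1 hrec2 hN (n := m) (by omega)
  have hb : ∑ k ∈ Icc 1 (m + 1 - N - 1), (b : ℤ) * Q k =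
      ∑ k ∈ Icc 1 (m - N - 1), (b : ℤ) * Q k + b * Q (m - N) := by
    rw [show m + 1 - N - 1 = m - N - 1 + 1 by omega, sum_Icc_succ_top (by omega),
      show m - N - 1 + 1 = m - N by omega]
  have habel := sum_Icc_mul_sub_sum_Icc_mul_succ (fun k ↦ (e k : ℤ))
    (fun k ↦ (Q (m + 1 - k) : ℤ)) hN
  simp only [Nat.add_sub_add_right, Nat.add_sub_cancel] at habel
  rw [Nat.add_sub_cancel, Nat.sub_sub, Nat.add_sub_add_right]
  linear_combination hsucc - hprev + hb + habel

/-- Linear recurrences with negative coefficients from Zeckendorf conditions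
with a common tail: if `Q 1 = 1` and
`Q n = 1 + Σ_{k=1}^{n-1} e k * Q (n-k)` for `2 ≤ n ≤ N+1`, while
`Q n = 1 + Σ_{k=1}^{n-N-1} b * Q k + Σ_{k=1}^{N} e k * Q (n-k)` for `n ≥ N+2`,
then `Q n = (e 1 + 1) Q (n-1) + Σ_{k=2}^{N} (e k - e (k-1)) Q (n-k)
+ (b - e N) Q (n-N-1)` in the integers for all `n ≥ N+2`. -/
theorem short_recurrence_with_negative_coefficients (N : ℕ) (hN : 1 ≤ N)
    (b : ℕ) (e : ℕ → ℕ) (he1 : 1 ≤ e 1) (Q : ℕ → ℕ) (hQ1 : Q 1 = 1)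
    (hrec1 : ∀ n, 2 ≤ n → n ≤ N + 1 →
      Q n = 1 + ∑ k ∈ Finset.Icc 1 (n - 1), e k * Q (n - k))
    (hrec2 : ∀ n, N + 2 ≤ n →
      Q n = 1 + (∑ k ∈ Finset.Icc 1 (n - N - 1), b * Q k) +
        ∑ k ∈ Finset.Icc 1 N, e k * Q (n - k)) :
    ∀ n, N + 2 ≤ n →
      (Q n : ℤ) = ((e 1 : ℤ) + 1) * Q (n - 1) +
        (∑ k ∈ Finset.Icc 2 N, ((e k : ℤ) - (e (k - 1) : ℤ)) * Q (n - k)) +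
        ((b : ℤ) - (e N : ℤ)) * Q (n - N - 1) :=
  short_recurrence_with_negative_coefficients_general N hN b e Q hrec1 hrec2
end

section
/- For every positive integer j there exist a nontrivial Zeckendorf collection 𝓔 for positive integers (nontrivial: 𝓔 contains at least one element other than the zero function and the basis functions β^i) and a strictly increasing sequence Q : {1,2,…} → ℕ with the unique 𝓔-representation property such that X_Q = {j + m : m = 1, 2, 3, …}. -/
/-- The extra element `2·β¹`. -/
def twoB : ℕ → ℕ := fun k => 2 * beta 1 k

/-- Our Zeckendorf collection. -/
def Ez : Set (ℕ → ℕ) := {0, twoB} ∪ {f | ∃ n, 1 ≤ n ∧ f = beta n}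

lemma mem_Ez_iff {f : ℕ → ℕ} : f ∈ Ez ↔ f = 0 ∨ f = twoB ∨ ∃ n, 1 ≤ n ∧ f = beta n := by
  simp only [Ez, Set.mem_union, Set.mem_insert_iff, Set.mem_singleton_iff, Set.mem_setOf_eq]
  tauto

lemma beta_mem_Ez {n : ℕ} (hn : 1 ≤ n) : beta n ∈ Ez := mem_Ez_iff.2 (Or.inr (Or.inr ⟨n, hn, rfl⟩))
lemma zero_mem_Ez : (0 : ℕ → ℕ) ∈ Ez := mem_Ez_iff.2 (Or.inl rfl)
lemma twoB_mem_Ez : twoB ∈ Ez := mem_Ez_iff.2 (Or.inr (Or.inl rfl))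

lemma not_ascLt_self (μ : ℕ → ℕ) : ¬ AscLt μ μ := by
  rintro ⟨k, hk, -⟩; omega

lemma not_ascLt_zero_s9 (μ : ℕ → ℕ) : ¬ AscLt μ 0 := by
  rintro ⟨k, hk, -⟩; simp at hk

lemma ascLt_beta_beta {m n : ℕ} (h : m < n) : AscLt (beta m) (beta n) :=
  ⟨n, by simp [beta, h.ne'], fun i hi => by simp [beta, hi.ne', (h.trans hi).ne']⟩

lemma ascLt_zero_beta {n : ℕ} : AscLt 0 (beta n) :=
  ⟨n, by simp [beta], fun i hi => by simp [beta, hi.ne']⟩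

lemma ascLt_zero_twoB : AscLt 0 twoB :=
  ⟨1, by simp [twoB, beta], fun i hi => by simp only [twoB, beta, Pi.zero_apply]; split_ifs <;> omega⟩

lemma ascLt_beta1_twoB : AscLt (beta 1) twoB :=
  ⟨1, by simp [twoB, beta], fun i hi => by simp only [twoB, beta, Pi.zero_apply]; split_ifs <;> omega⟩

lemma ascLt_twoB_beta {n : ℕ} (hn : 2 ≤ n) : AscLt twoB (beta n) :=
  ⟨n, by simp [twoB, beta]; omega, fun i hi => by simp only [twoB, beta, Pi.zero_apply]; split_ifs <;> omega⟩

/-- If `β^m <ₐ μ` and `μ` vanishes above `N`, then `m ≤ N`. -/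
lemma ascLt_beta_bound {μ : ℕ → ℕ} {m N : ℕ} (hμ : ∀ k, N < k → μ k = 0)
    (h : AscLt (beta m) μ) : m ≤ N := by
  obtain ⟨k, hk, hj⟩ := h
  by_contra hmN
  push_neg at hmN
  have hkN : k ≤ N := by
    by_contra h'
    push_neg at h'
    rw [hμ k h'] at hk; omega
  have h1 : beta m m = μ m := hj m (by omega)
  rw [hμ m (by omega)] at h1
  simp [beta] at h1

lemma twoB_vanish : ∀ k, 1 < k → twoB k = 0 := by
  intro k hk; simp only [twoB, beta]; split_ifs <;> omega

lemma beta_vanish (n : ℕ) : ∀ k, n < k → beta n k = 0 := by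
  intro k hk; simp [beta, hk.ne']

lemma not_ascLt_twoB_beta1 : ¬ AscLt twoB (beta 1) := by
  rintro ⟨k, hk, -⟩
  simp only [twoB, beta] at hk
  split_ifs at hk <;> omega

lemma Ez_zeck : IsZeckendorf Ez := by
  refine ⟨⟨?_, zero_mem_Ez, fun i hi => beta_mem_Ez hi⟩, ?_, ?_⟩
  · intro ε hε
    rcases mem_Ez_iff.1 hε with rfl | rfl | ⟨n, hn, rfl⟩
    · exact ⟨rfl, by simp [FinSupp]⟩
    · refine ⟨by simp [twoB, beta], (Set.finite_singleton 1).subset ?_⟩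
      intro x hx
      simp only [Function.mem_support, twoB, beta] at hx
      split_ifs at hx with h
      · simp [h]
      · simp at hx
    · refine ⟨by simp [beta]; omega, (Set.finite_singleton n).subset ?_⟩
      intro x hx
      simp only [Function.mem_support, beta] at hx
      split_ifs at hx with h
      · simp [h]
      · simp at hx
  · intro μ hμ
    obtain ⟨N, hN⟩ : ∃ N, ∀ k, N < k → μ k = 0 := by
      rcases mem_Ez_iff.1 hμ with rfl | rfl | ⟨n, hn, rfl⟩
      · exact ⟨1, fun k _ => rfl⟩
      · exact ⟨1, twoB_vanish⟩
      · exact ⟨n, beta_vanish n⟩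
    apply Set.Finite.subset
      (Set.Finite.union ((Set.finite_singleton twoB).insert (0 : ℕ → ℕ))
        ((Set.finite_Iic N).image beta))
    rintro σ ⟨hσ, hlt⟩
    rcases mem_Ez_iff.1 hσ with rfl | rfl | ⟨m, hm, rfl⟩
    · exact Set.mem_union_left _ (Set.mem_insert _ _)
    · exact Set.mem_union_left _ (by simp)
    · exact Set.mem_union_right _ ⟨m, Set.mem_Iic.2 (ascLt_beta_bound hN hlt), rfl⟩
  · intro μ hμ
    rcases mem_Ez_iff.1 hμ with rfl | rfl | ⟨n, hn, rfl⟩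
    · -- μ = 0, successor is β¹
      refine ⟨beta 1, ⟨beta_mem_Ez le_rfl, ascLt_zero_beta, ?_⟩,
        Or.inl (by funext k; simp)⟩
      intro σ hσ hlt
      rcases mem_Ez_iff.1 hσ with rfl | rfl | ⟨m, hm, rfl⟩
      · exact absurd hlt (not_ascLt_self 0)
      · exact Or.inr ascLt_beta1_twoB
      · rcases Nat.lt_or_ge 1 m with h | h
        · exact Or.inr (ascLt_beta_beta h)
        · exact Or.inl (by rw [le_antisymm h hm])
    · -- μ = twoB, successor is β²
      refine ⟨beta 2, ⟨beta_mem_Ez (by norm_num), ascLt_twoB_beta le_rfl, ?_⟩,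
        Or.inr ⟨2, le_rfl, twoB, ⟨twoB_mem_Ez, ascLt_twoB_beta le_rfl, ?_⟩,
          fun _ _ _ => rfl, ?_⟩⟩
      · intro σ hσ hlt
        rcases mem_Ez_iff.1 hσ with rfl | rfl | ⟨m, hm, rfl⟩
        · exact absurd hlt (not_ascLt_zero_s9 twoB)
        · exact absurd hlt (not_ascLt_self twoB)
        · rcases Nat.lt_or_ge 2 m with h | h
          · exact Or.inr (ascLt_beta_beta h)
          · interval_cases m
            · exact absurd hlt not_ascLt_twoB_beta1
            · exact Or.inl rfl
      · intro σ hσ hlt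
        rcases mem_Ez_iff.1 hσ with rfl | rfl | ⟨m, hm, rfl⟩
        · exact Or.inr ascLt_zero_twoB
        · exact Or.inl rfl
        · have h2 : m ≤ 2 := ascLt_beta_bound (beta_vanish 2) hlt
          have h3 : m ≠ 2 := by rintro rfl; exact not_ascLt_self _ hlt
          interval_cases m
          · exact Or.inr ascLt_beta1_twoB
          · exact absurd rfl h3
      · funext k; simp only [twoB, beta]; split_ifs <;> omega
    · rcases Nat.lt_or_ge 1 n with hn2 | hn1
      · -- μ = βⁿ, n ≥ 2, successor is βⁿ⁺¹
        refine ⟨beta (n + 1), ⟨beta_mem_Ez (by omega), ascLt_beta_beta (lt_add_one n), ?_⟩,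
          Or.inr ⟨n + 1, by omega, beta n,
            ⟨beta_mem_Ez hn, ascLt_beta_beta (lt_add_one n), ?_⟩,
            fun _ _ _ => rfl, ?_⟩⟩
        · intro σ hσ hlt
          rcases mem_Ez_iff.1 hσ with rfl | rfl | ⟨m, hm, rfl⟩
          · exact absurd hlt (not_ascLt_zero_s9 _)
          · have := ascLt_beta_bound twoB_vanish hlt; omega
          · have h1 : n ≤ m := ascLt_beta_bound (beta_vanish m) hlt
            have h2 : n ≠ m := by rintro rfl; exact not_ascLt_self _ hlt
            rcases Nat.lt_or_ge (n + 1) m with h | h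
            · exact Or.inr (ascLt_beta_beta h)
            · have : m = n + 1 := by omega
              exact Or.inl (by rw [this])
        · intro σ hσ hlt
          rcases mem_Ez_iff.1 hσ with rfl | rfl | ⟨m, hm, rfl⟩
          · exact Or.inr ascLt_zero_beta
          · exact Or.inr (ascLt_twoB_beta hn2)
          · have h1 : m ≤ n + 1 := ascLt_beta_bound (beta_vanish (n + 1)) hlt
            have h2 : m ≠ n + 1 := by rintro rfl; exact not_ascLt_self _ hlt
            rcases Nat.lt_or_ge m n with h | h
            · exact Or.inr (ascLt_beta_beta h)
            · have : m = n := by omega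
              exact Or.inl (by rw [this])
        · funext k; simp only [beta]; split_ifs <;> omega
      · -- μ = β¹, successor is twoB
        have hn1' : n = 1 := by omega
        subst hn1'
        refine ⟨twoB, ⟨twoB_mem_Ez, ascLt_beta1_twoB, ?_⟩,
          Or.inl (by funext k; simp only [twoB, beta]; split_ifs <;> omega)⟩
        intro σ hσ hlt
        rcases mem_Ez_iff.1 hσ with rfl | rfl | ⟨m, hm, rfl⟩
        · exact absurd hlt (not_ascLt_zero_s9 _)
        · exact Or.inl rfl
        · rcases Nat.lt_or_ge 1 m with h | h
          · exact Or.inr (ascLt_twoB_beta h)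
          · have : m = 1 := by omega
            subst this
            exact absurd hlt (not_ascLt_self _)

/-- The fundamental sequence: `j+k`, skipping the value `2j+2`. -/
def Qf (j : ℕ) : ℕ → ℕ := fun k => if k ≤ j + 1 then j + k else j + k + 1

lemma Qf_low {j m : ℕ} (h2 : m ≤ j + 1) : Qf j m = j + m := by
  simp [Qf, h2]

lemma Qf_high {j m : ℕ} (h : j + 2 ≤ m) : Qf j m = j + m + 1 := by
  simp only [Qf]; split_ifs <;> omega

lemma Qf_mono {j m m' : ℕ} (h : m < m') : Qf j m < Qf j m' := by
  simp only [Qf]; split_ifs <;> omega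

lemma Qf_pos {j m : ℕ} (h : 1 ≤ m) : j + 1 ≤ Qf j m := by
  simp only [Qf]; split_ifs <;> omega

lemma Qf_ne_double {j m : ℕ} (h : 1 ≤ m) : Qf j m ≠ 2 * j + 2 := by
  simp only [Qf]; split_ifs <;> omega

lemma finsum_beta (Q : ℕ → ℕ) (n : ℕ) : ∑ᶠ k, beta n k * Q k = Q n := by
  rw [finsum_eq_single _ n (fun x hx => by simp [beta, hx])]
  simp [beta]

lemma finsum_twoB (Q : ℕ → ℕ) : ∑ᶠ k, twoB k * Q k = 2 * Q 1 := by
  rw [finsum_eq_single _ 1 (fun x hx => by simp [twoB, beta, hx])]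
  simp [twoB, beta]

lemma finsum_zero' (Q : ℕ → ℕ) : ∑ᶠ k, (0 : ℕ → ℕ) k * Q k = 0 := by simp

lemma twoB_ne_zero : twoB ≠ 0 := by
  intro h
  have := congrFun h 1
  simp [twoB, beta] at this

/-- For every positive integer `j`, the set `{j + m : m ≥ 1}` is an
`𝓔`-subset of `ℕ` for some nontrivial Zeckendorf collection `𝓔`, with a
strictly increasing fundamental sequence. -/
theorem shifted_naturals_is_E_subset (j : ℕ) (hj : 0 < j) :
    ∃ (E : Set (ℕ → ℕ)) (Q : ℕ → ℕ), IsZeckendorf E ∧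
      (∃ μ ∈ E, μ ≠ 0 ∧ ∀ i, 1 ≤ i → μ ≠ beta i) ∧
      (∀ k, 1 ≤ k → Q k < Q (k + 1)) ∧
      Set.InjOn (fun ε : ℕ → ℕ => ∑ᶠ k, ε k * Q k) E ∧
      (fun ε : ℕ → ℕ => ∑ᶠ k, ε k * Q k) '' (E \ {0}) =
        {x : ℕ | ∃ m, 1 ≤ m ∧ x = j + m} := by
  have hQ1 : Qf j 1 = j + 1 := Qf_low (by omega)
  refine ⟨Ez, Qf j, Ez_zeck, ⟨twoB, twoB_mem_Ez, twoB_ne_zero, ?_⟩, ?_, ?_, ?_⟩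
  · intro i hi h
    have := congrFun h 1
    simp only [twoB, beta] at this
    split_ifs at this <;> omega
  · intro k hk
    exact Qf_mono (lt_add_one k)
  · intro a ha b hb hab
    simp only at hab
    rcases mem_Ez_iff.1 ha with rfl | rfl | ⟨m, hm, rfl⟩ <;>
      rcases mem_Ez_iff.1 hb with rfl | rfl | ⟨m', hm', rfl⟩
    · rfl
    · rw [finsum_zero', finsum_twoB, hQ1] at hab; omega
    · rw [finsum_zero', finsum_beta] at hab
      have := Qf_pos (j := j) hm'; omega
    · rw [finsum_zero', finsum_twoB, hQ1] at hab; omega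
    · rfl
    · rw [finsum_twoB, finsum_beta, hQ1] at hab
      exact absurd hab.symm (Qf_ne_double hm' ∘ (by omega : Qf j m' = 2 * (j + 1) → Qf j m' = 2 * j + 2))
    · rw [finsum_zero', finsum_beta] at hab
      have := Qf_pos (j := j) hm; omega
    · rw [finsum_twoB, finsum_beta, hQ1] at hab
      exact absurd hab (Qf_ne_double hm ∘ (by omega : Qf j m = 2 * (j + 1) → Qf j m = 2 * j + 2))
    · rw [finsum_beta, finsum_beta] at hab
      have : m = m' := by
        rcases lt_trichotomy m m' with h | h | h
        · exact absurd hab (Qf_mono h).ne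
        · exact h
        · exact absurd hab.symm (Qf_mono h).ne
      rw [this]
  · ext x
    simp only [Set.mem_image, Set.mem_diff, Set.mem_singleton_iff, Set.mem_setOf_eq]
    constructor
    · rintro ⟨ε, ⟨hεE, hε0⟩, rfl⟩
      rcases mem_Ez_iff.1 hεE with rfl | rfl | ⟨n, hn, rfl⟩
      · exact absurd rfl hε0
      · exact ⟨j + 2, by omega, by simp only [finsum_twoB, hQ1]; omega⟩
      · by_cases h : n ≤ j + 1
        · exact ⟨n, hn, by simp only [finsum_beta, Qf_low h]⟩
        · exact ⟨n + 1, by omega, by simp only [finsum_beta, Qf_high (by omega : j + 2 ≤ n)]; omega⟩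
    · rintro ⟨m, hm, rfl⟩
      by_cases hm2 : m = j + 2
      · exact ⟨twoB, ⟨twoB_mem_Ez, twoB_ne_zero⟩, by simp only [finsum_twoB, hQ1]; omega⟩
      · by_cases h : m ≤ j + 1
        · exact ⟨beta m, ⟨beta_mem_Ez hm, beta_ne_zero m⟩, by simp only [finsum_beta, Qf_low h]⟩
        · refine ⟨beta (m - 1), ⟨beta_mem_Ez (by omega), beta_ne_zero _⟩, ?_⟩
          simp only [finsum_beta, Qf_high (by omega : j + 2 ≤ m - 1)]
          omega
end

section
/- Let Q : {0,1,2,…} → ℝ satisfy Q_0 = 1, Q_n ∈ (0,1) for all n ≥ 1, Q strictly decreasing, and Q_n → 0 as n → ∞. Then for every n ≥ 1 there exists a function μ : {1,2,…} → ℕ such that μ_k = 0 for all k < n, μ_n ≥ 1, μ_k ≠ 0 for infinitely many k, and the series Σ_{k=1}^∞ μ_k Q_k converges with sum equal to Q_{n−1}. -/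
open Filter

/-- Zeckendorf's theorem for the unit interval, part 1(a): each `Q (n-1)` of a
decreasing null sequence in `(0,1)` with `Q 0 = 1` admits an expansion
`Q (n-1) = Σ_k μ_k Q_k` by a coefficient function `μ` of order `n` with
infinite support. -/
theorem real_expansion_exists (Q : ℕ → ℝ) (hQ0 : Q 0 = 1)
    (hmem : ∀ n, 1 ≤ n → Q n ∈ Set.Ioo (0 : ℝ) 1)
    (hdec : StrictAnti Q)
    (hlim : Filter.Tendsto Q Filter.atTop (nhds 0)) :
    ∀ n, 1 ≤ n → ∃ μ : ℕ → ℕ,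
      (∀ k, k < n → μ k = 0) ∧ 1 ≤ μ n ∧ {k | μ k ≠ 0}.Infinite ∧
      HasSum (fun k => (μ k : ℝ) * Q k) (Q (n - 1)) := by
  classical
  have hQpos : ∀ k, 0 < Q k := by
    intro k
    rcases Nat.eq_zero_or_pos k with h | h
    · simp [h, hQ0]
    · exact (hmem k h).1
  have hex : ∀ (a : ℕ) (r : ℝ), 0 < r → ∃ k, a < k ∧ Q k < r := by
    intro a r hr
    exact ((eventually_gt_atTop a).and (hlim.eventually (gt_mem_nhds hr))).exists
  intro n hn
  set step : ℕ × ℝ → ℕ × ℝ := fun p =>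
    if h : 0 < p.2 then
      ((Nat.find (hex p.1 p.2 h) : ℕ),
        p.2 - ((⌈p.2 / Q (Nat.find (hex p.1 p.2 h))⌉₊ - 1 : ℕ) : ℝ) *
          Q (Nat.find (hex p.1 p.2 h)))
    else p with hstepdef
  have stepLemma : ∀ p : ℕ × ℝ, 0 < p.2 →
      p.1 < (step p).1 ∧ Q ((step p).1) < p.2 ∧
      2 ≤ ⌈p.2 / Q ((step p).1)⌉₊ ∧
      (step p).2 = p.2 - ((⌈p.2 / Q ((step p).1)⌉₊ - 1 : ℕ) : ℝ) * Q ((step p).1) ∧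
      0 < (step p).2 ∧ (step p).2 ≤ Q ((step p).1) ∧
      (∀ k, p.1 < k → Q k < p.2 → (step p).1 ≤ k) := by
    intro p h
    have hsp : step p = ((Nat.find (hex p.1 p.2 h) : ℕ),
        p.2 - ((⌈p.2 / Q (Nat.find (hex p.1 p.2 h))⌉₊ - 1 : ℕ) : ℝ) *
          Q (Nat.find (hex p.1 p.2 h))) := by
      rw [hstepdef]; exact dif_pos h
    rw [hsp]
    dsimp only
    set k := Nat.find (hex p.1 p.2 h) with hk
    have hkspec := Nat.find_spec (hex p.1 p.2 h)
    have hQk : 0 < Q k := hQpos k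
    set x := p.2 / Q k with hx
    have hx1 : 1 < x := (one_lt_div hQk).mpr hkspec.2
    have hx0 : 0 ≤ x := le_of_lt (lt_trans one_pos hx1)
    have hc2 : 2 ≤ ⌈x⌉₊ := by
      have : 1 < ⌈x⌉₊ := Nat.lt_ceil.mpr (by exact_mod_cast hx1)
      omega
    have hcast : ((⌈x⌉₊ - 1 : ℕ) : ℝ) = (⌈x⌉₊ : ℝ) - 1 := by
      have : (1 : ℕ) ≤ ⌈x⌉₊ := by omega
      push_cast [this]; ring
    have hmlt : ((⌈x⌉₊ - 1 : ℕ) : ℝ) < x := by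
      rw [hcast]
      have := Nat.ceil_lt_add_one hx0
      linarith
    have hmle : x ≤ ((⌈x⌉₊ - 1 : ℕ) : ℝ) + 1 := by
      rw [hcast]
      have := Nat.le_ceil x
      linarith
    have hxq : x * Q k = p.2 := div_mul_cancel₀ p.2 (ne_of_gt hQk)
    have hmq_lt : ((⌈x⌉₊ - 1 : ℕ) : ℝ) * Q k < p.2 := by
      calc ((⌈x⌉₊ - 1 : ℕ) : ℝ) * Q k < x * Q k := by
            exact mul_lt_mul_of_pos_right hmlt hQk
        _ = p.2 := hxq
    have hp2_le : p.2 ≤ (((⌈x⌉₊ - 1 : ℕ) : ℝ) + 1) * Q k := by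
      calc p.2 = x * Q k := hxq.symm
        _ ≤ (((⌈x⌉₊ - 1 : ℕ) : ℝ) + 1) * Q k := mul_le_mul_of_nonneg_right hmle (le_of_lt hQk)
    refine ⟨hkspec.1, hkspec.2, hc2, rfl, by linarith, by nlinarith, ?_⟩
    intro k' hk1 hk2
    exact Nat.find_min' (hex p.1 p.2 h) ⟨hk1, hk2⟩
  set s : ℕ → ℕ × ℝ := fun i => step^[i] (n - 1, Q (n - 1)) with hsdef
  have hs0 : s 0 = (n - 1, Q (n - 1)) := rfl
  have hssucc : ∀ i, s (i + 1) = step (s i) := by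
    intro i
    rw [hsdef]
    exact Function.iterate_succ_apply' step i _
  have hrpos : ∀ i, 0 < (s i).2 := by
    intro i
    induction i with
    | zero => rw [hs0]; exact hQpos (n - 1)
    | succ i ih =>
      rw [hssucc i]
      exact (stepLemma (s i) ih).2.2.2.2.1
  -- main facts at each step
  set j : ℕ → ℕ := fun i => (s (i + 1)).1 with hjdef
  set c : ℕ → ℕ := fun i => ⌈(s i).2 / Q (j i)⌉₊ - 1 with hcdef
  have L : ∀ i, (s i).1 < j i ∧ Q (j i) < (s i).2 ∧ 2 ≤ ⌈(s i).2 / Q (j i)⌉₊ ∧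
      (s (i + 1)).2 = (s i).2 - ((c i : ℕ) : ℝ) * Q (j i) ∧
      0 < (s (i + 1)).2 ∧ (s (i + 1)).2 ≤ Q (j i) ∧
      (∀ k, (s i).1 < k → Q k < (s i).2 → j i ≤ k) := by
    intro i
    have := stepLemma (s i) (hrpos i)
    rw [← hssucc i] at this
    exact this
  have hamono : StrictMono (fun i => (s i).1) := by
    apply strictMono_nat_of_lt_succ
    intro i
    exact (L i).1
  have hjmono : StrictMono j := fun i k h => hamono (Nat.succ_lt_succ h)
  have hj0 : j 0 = n := by
    have h1 : n - 1 < j 0 := by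
      have := (L 0).1; rw [hs0] at this; exact this
    have h2 : j 0 ≤ n := by
      apply (L 0).2.2.2.2.2.2 n
      · rw [hs0]; omega
      · rw [hs0]; exact hdec (by omega)
    omega
  have hcpos : ∀ i, 1 ≤ c i := by
    intro i
    have h2 := (L i).2.2.1
    have h3 : c i = ⌈(s i).2 / Q (j i)⌉₊ - 1 := rfl
    omega
  -- telescoping
  have htel : ∀ N, ∑ i ∈ Finset.range N, ((c i : ℕ) : ℝ) * Q (j i) = Q (n - 1) - (s N).2 := by
    intro N
    induction N with
    | zero => simp [hs0]
    | succ N ih =>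
      rw [Finset.sum_range_succ, ih, (L N).2.2.2.1]
      ring
  -- the coefficient function
  set μ : ℕ → ℕ := fun k => if h : ∃ i, j i = k then c h.choose else 0 with hμdef
  have hμj : ∀ i, μ (j i) = c i := by
    intro i
    have hh : ∃ i', j i' = j i := ⟨i, rfl⟩
    rw [hμdef]
    simp only [dif_pos hh]
    congr 1
    exact hjmono.injective hh.choose_spec
  have hμ0 : ∀ k, k ∉ Set.range j → μ k = 0 := by
    intro k hk
    rw [hμdef]
    exact dif_neg (by simpa [Set.range] using hk)
  -- limit of remainders
  have hrlim : Tendsto (fun N => (s N).2) atTop (nhds 0) := by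
    have hQa : Tendsto (fun N => Q ((s N).1)) atTop (nhds 0) :=
      hlim.comp hamono.tendsto_atTop
    apply tendsto_of_tendsto_of_tendsto_of_le_of_le' tendsto_const_nhds hQa
    · exact Eventually.of_forall fun N => le_of_lt (hrpos N)
    · filter_upwards [eventually_ge_atTop 1] with N hN
      obtain ⟨M, rfl⟩ := Nat.exists_eq_add_of_le hN
      have := (L M).2.2.2.2.2.1
      simpa [Nat.add_comm] using this
  have hfsum : HasSum (fun i => ((c i : ℕ) : ℝ) * Q (j i)) (Q (n - 1)) := by
    rw [hasSum_iff_tendsto_nat_of_nonneg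
      (fun i => mul_nonneg (Nat.cast_nonneg _) (le_of_lt (hQpos _)))]
    have : (fun N => ∑ i ∈ Finset.range N, ((c i : ℕ) : ℝ) * Q (j i)) =
        fun N => Q (n - 1) - (s N).2 := funext htel
    rw [this]
    simpa using tendsto_const_nhds.sub hrlim
  refine ⟨μ, ?_, ?_, ?_, ?_⟩
  · intro k hk
    apply hμ0
    rintro ⟨i, rfl⟩
    have : n ≤ j i := hj0 ▸ hjmono.monotone (Nat.zero_le i)
    omega
  · rw [← hj0, hμj 0]
    exact hcpos 0
  · apply Set.infinite_of_injective_forall_mem (f := j) hjmono.injective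
    intro i
    simp only [Set.mem_setOf_eq, hμj i]
    have := hcpos i
    omega
  · rw [← hjmono.injective.hasSum_iff (fun k hk => by rw [hμ0 k hk]; simp)]
    have : ((fun k => (μ k : ℝ) * Q k) ∘ j) = fun i => ((c i : ℕ) : ℝ) * Q (j i) := by
      funext i
      simp [Function.comp, hμj i]
    rw [this]
    exact hfsum
end

section
/- Let N ≥ 1 and let e_1,…,e_N be nonnegative integers with e_1 ≥ 1 and e_N ≥ 1. Suppose Q : {0,1,2,…} → ℝ is strictly decreasing with Q_n > 0 for all n, Q_0 = 1, and Q_n = Σ_{k=1}^N e_k Q_{n+k} for all n ≥ 0. Then Q_n = ω^n for all n ≥ 0, where ω is the unique positive real zero of the polynomial e_N x^N + e_{N−1} x^{N−1} + ⋯ + e_1 x − 1. -/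
/-!
Dividing by `ω ^ n` turns the recurrence into `c n = ∑ w k * c (n + k)` for
`c n = Q n / ω ^ n > 0`, with weights `w k = e k * ω ^ k` summing to `1` and `w 1 > 0`.
Then `u = c - inf c` is a nonnegative solution, and it satisfies a Harnack inequality:
`w 1 * u (n + 1) ≤ u n` carries smallness forward, while `N` consecutive small values carry it
backward, so `u m ≤ u n / w 1 ^ (m + N - 1)` for all `m, n`. Taking the infimum over `n` gives
`u = 0`, so `c` is constant, equal to `c 0 = 1`.
-/

open Finset

section Root

variable {N : ℕ} {a : ℕ → ℝ}

theorem strictMonoOn_sum_mul_pow (ha : ∀ k, 0 ≤ a k) (hN : 1 ≤ N) (ha1 : 0 < a 1) :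
    StrictMonoOn (fun x : ℝ => ∑ k ∈ Icc 1 N, a k * x ^ k) (Set.Ici 0) := by
  intro x hx y _ hxy
  refine sum_lt_sum (fun k _ => ?_) ⟨1, mem_Icc.2 ⟨le_rfl, hN⟩, ?_⟩
  · have : x ^ k ≤ y ^ k := pow_le_pow_left₀ hx hxy.le k
    exact mul_le_mul_of_nonneg_left this (ha k)
  · simpa using mul_lt_mul_of_pos_left hxy ha1

theorem exists_pos_sum_mul_pow_eq_one (ha : ∀ k, 0 ≤ a k) (hN : 1 ≤ N) (ha1 : 1 ≤ a 1) :
    ∃ ω : ℝ, 0 < ω ∧ ∑ k ∈ Icc 1 N, a k * ω ^ k = 1 := by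
  set F : ℝ → ℝ := fun x => ∑ k ∈ Icc 1 N, a k * x ^ k
  have hF0 : F 0 = 0 := sum_eq_zero fun k hk => by
    simp [show k ≠ 0 by have := (mem_Icc.1 hk).1; omega]
  have hF1 : 1 ≤ F 1 := ha1.trans <| by
    simpa [F] using single_le_sum (fun k _ => ha k) (mem_Icc.2 ⟨le_rfl, hN⟩)
  have hcont : ContinuousOn F (Set.Icc 0 1) := by fun_prop
  have hF01 : (1 : ℝ) ∈ Set.Icc (F 0) (F 1) := ⟨by rw [hF0]; exact zero_le_one, hF1⟩
  obtain ⟨ω, hω, hFω⟩ := intermediate_value_Icc zero_le_one hcont hF01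
  refine ⟨ω, hω.1.lt_of_ne ?_, hFω⟩
  rintro rfl
  simp [hF0] at hFω

end Root

theorem div_pow_eq_sum_of_recurrence {K : Type*} [Field K] {s : Finset ℕ} {a Q : ℕ → K}
    {ω : K} (hω : ω ≠ 0) (hrec : ∀ n, Q n = ∑ k ∈ s, a k * Q (n + k)) (n : ℕ) :
    Q n / ω ^ n = ∑ k ∈ s, a k * ω ^ k * (Q (n + k) / ω ^ (n + k)) := by
  rw [hrec n, sum_div]
  refine sum_congr rfl fun k _ => ?_
  rw [pow_add]
  field_simp

section AveragingRecurrence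

variable {N : ℕ} {w u : ℕ → ℝ}
  (hw : ∀ k, 0 ≤ w k) (hsum : ∑ k ∈ Icc 1 N, w k = 1)
  (hu : ∀ n, u n = ∑ k ∈ Icc 1 N, w k * u (n + k))
include hw hu

theorem pow_mul_apply_add_le_of_recurrence (hN : 1 ≤ N) (hu0 : ∀ n, 0 ≤ u n) (n j : ℕ) :
    w 1 ^ j * u (n + j) ≤ u n := by
  induction j with
  | zero => simp
  | succ j ih =>
    have hstep : w 1 * u (n + j + 1) ≤ u (n + j) := by
      rw [hu (n + j)]
      exact single_le_sum (f := fun k => w k * u (n + j + k))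
        (fun k _ => mul_nonneg (hw k) (hu0 _)) (mem_Icc.2 ⟨le_rfl, hN⟩)
    calc w 1 ^ (j + 1) * u (n + (j + 1)) = w 1 ^ j * (w 1 * u (n + j + 1)) := by ring_nf
      _ ≤ w 1 ^ j * u (n + j) := mul_le_mul_of_nonneg_left hstep (pow_nonneg (hw 1) j)
      _ ≤ u n := ih

include hsum

theorem le_of_next_window_le {n : ℕ} {η : ℝ} (hwin : ∀ j < N, u (n + 1 + j) ≤ η) :
    u n ≤ η := by
  rw [hu n]
  calc ∑ k ∈ Icc 1 N, w k * u (n + k) ≤ ∑ k ∈ Icc 1 N, w k * η := by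
        refine sum_le_sum fun k hk => mul_le_mul_of_nonneg_left ?_ (hw k)
        obtain ⟨hk1, hkN⟩ := mem_Icc.1 hk
        simpa [show n + 1 + (k - 1) = n + k by omega] using hwin (k - 1) (by omega)
    _ = η := by rw [← sum_mul, hsum, one_mul]

theorem window_le_of_later_window_le {p : ℕ} {η : ℝ} (hwin : ∀ j < N, u (p + j) ≤ η) :
    ∀ m ≤ p, ∀ j < N, u (m + j) ≤ η := by
  intro m hm
  obtain ⟨d, rfl⟩ := Nat.exists_eq_add_of_le hm
  clear hm
  induction d generalizing m with
  | zero => simpa using hwin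
  | succ d ih =>
    have h := ih (m + 1) fun j hj => by
      rw [show m + 1 + d + j = m + (d + 1) + j by omega]
      exact hwin j hj
    rintro (_ | j) hj
    · exact le_of_next_window_le hw hsum hu h
    · simpa [add_assoc, add_comm 1 j] using h j (by omega)

theorem harnack_of_recurrence (hw1 : 0 < w 1) (hu0 : ∀ n, 0 ≤ u n) (m n : ℕ) :
    w 1 ^ (m + N - 1) * u m ≤ u n := by
  obtain ⟨k₀, hk₀⟩ : (Icc 1 N).Nonempty := nonempty_of_sum_ne_zero (hsum ▸ one_ne_zero)
  have hN : 1 ≤ N := (mem_Icc.1 hk₀).1.trans (mem_Icc.1 hk₀).2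
  have hw1le : w 1 ≤ 1 := hsum ▸ single_le_sum (fun k _ => hw k) (mem_Icc.2 ⟨le_rfl, hN⟩)
  have hκ : 0 < w 1 ^ (m + N - 1) := pow_pos hw1 _
  suffices u m ≤ u n / w 1 ^ (m + N - 1) by rwa [le_div_iff₀' hκ] at this
  have hwin : ∀ j < N, u (n + m + j) ≤ u n / w 1 ^ (m + N - 1) := by
    intro j hj
    rw [le_div_iff₀' hκ]
    calc w 1 ^ (m + N - 1) * u (n + m + j) ≤ w 1 ^ (m + j) * u (n + (m + j)) := by
          rw [add_assoc]
          exact mul_le_mul_of_nonneg_right (pow_le_pow_of_le_one hw1.le hw1le (by omega)) (hu0 _)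
      _ ≤ u n := pow_mul_apply_add_le_of_recurrence hw hu hN hu0 n (m + j)
  simpa using window_le_of_later_window_le hw hsum hu hwin m (by omega) 0 (by omega)

end AveragingRecurrence

theorem eq_of_bddBelow_of_recurrence {N : ℕ} {w c : ℕ → ℝ} (hw : ∀ k, 0 ≤ w k)
    (hsum : ∑ k ∈ Icc 1 N, w k = 1) (hw1 : 0 < w 1) (hc : BddBelow (Set.range c))
    (hrec : ∀ n, c n = ∑ k ∈ Icc 1 N, w k * c (n + k)) (m : ℕ) : c m = c 0 := by
  set i := sInf (Set.range c)
  have hi : ∀ n, i ≤ c n := fun n => csInf_le hc ⟨n, rfl⟩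
  have hu : ∀ n, c n - i = ∑ k ∈ Icc 1 N, w k * (c (n + k) - i) := by
    intro n
    simp only [mul_sub, sum_sub_distrib, ← sum_mul, hsum, one_mul, ← hrec n]
  have hci : ∀ m, c m = i := by
    intro m
    refine le_antisymm ?_ (hi m)
    have hlow : i + w 1 ^ (m + N - 1) * (c m - i) ≤ i := by
      refine le_csInf (Set.range_nonempty c) ?_
      rintro _ ⟨n, rfl⟩
      linarith [harnack_of_recurrence hw hsum hu hw1 (fun n => sub_nonneg.2 (hi n)) m n]
    nlinarith [pow_pos hw1 (m + N - 1)]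
  rw [hci m, hci 0]

theorem decreasing_recurrence_solution_is_geometric_general (N : ℕ) (hN : 1 ≤ N)
    (e : ℕ → ℕ) (he1 : 1 ≤ e 1)
    (Q : ℕ → ℝ) (hpos : ∀ n, 0 < Q n) (hQ0 : Q 0 = 1)
    (hrec : ∀ n : ℕ, Q n = ∑ k ∈ Finset.Icc 1 N, (e k : ℝ) * Q (n + k)) :
    ∃ ω : ℝ, 0 < ω ∧
      (∑ k ∈ Finset.Icc 1 N, (e k : ℝ) * ω ^ k) = 1 ∧
      (∀ x : ℝ, 0 < x → (∑ k ∈ Finset.Icc 1 N, (e k : ℝ) * x ^ k) = 1 → x = ω) ∧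
      ∀ n, Q n = ω ^ n := by
  have he : ∀ k, (0 : ℝ) ≤ e k := fun k => Nat.cast_nonneg _
  have he1' : (1 : ℝ) ≤ e 1 := by exact_mod_cast he1
  obtain ⟨ω, hω, hωroot⟩ := exists_pos_sum_mul_pow_eq_one he hN he1'
  refine ⟨ω, hω, hωroot, fun x hx hxroot => ?_, fun n => ?_⟩
  · exact (strictMonoOn_sum_mul_pow he hN (by linarith)).injOn hx.le hω.le
      (hxroot.trans hωroot.symm)
  have hw1 : 0 < (e 1 : ℝ) * ω ^ 1 := mul_pos (by linarith) (pow_pos hω 1)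
  have hc : BddBelow (Set.range fun n => Q n / ω ^ n) :=
    ⟨0, by rintro _ ⟨n, rfl⟩; exact (div_pos (hpos n) (pow_pos hω n)).le⟩
  have hconst := eq_of_bddBelow_of_recurrence (fun k => by positivity) hωroot hw1 hc
    (div_pow_eq_sum_of_recurrence hω.ne' hrec) n
  simpa [hQ0, div_eq_one_iff_eq (pow_pos hω n).ne'] using hconst

/-- Daykin's theorem (as used for the weak converse on the unit interval): a
strictly decreasing positive solution of the recurrence
`Q n = Σ_{k=1}^N e k * Q (n+k)` with `Q 0 = 1` must be `Q n = ω^n`, where `ω`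
is the unique positive real zero of `e_N x^N + ... + e_1 x - 1`. -/
theorem decreasing_recurrence_solution_is_geometric (N : ℕ) (hN : 1 ≤ N)
    (e : ℕ → ℕ) (he1 : 1 ≤ e 1) (heN : 1 ≤ e N)
    (Q : ℕ → ℝ) (hpos : ∀ n, 0 < Q n) (hanti : StrictAnti Q) (hQ0 : Q 0 = 1)
    (hrec : ∀ n : ℕ, Q n = ∑ k ∈ Finset.Icc 1 N, (e k : ℝ) * Q (n + k)) :
    ∃ ω : ℝ, 0 < ω ∧
      (∑ k ∈ Finset.Icc 1 N, (e k : ℝ) * ω ^ k) = 1 ∧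
      (∀ x : ℝ, 0 < x → (∑ k ∈ Finset.Icc 1 N, (e k : ℝ) * x ^ k) = 1 → x = ω) ∧
      ∀ n, Q n = ω ^ n :=
  decreasing_recurrence_solution_is_geometric_general N hN e he1 Q hpos hQ0 hrec
end

section
/- Let f(z) = a_n z^n + a_{n−1} z^{n−1} + ⋯ + a_1 z + a_0 be a polynomial with real coefficients such that a_k ≥ 0 for all 1 ≤ k ≤ n, and suppose there exist indices 1 ≤ m < ℓ ≤ n with gcd(m,ℓ) = 1, a_m ≠ 0 and a_ℓ ≠ 0. If ω is a positive real number with f(ω) = 0, then ω is the only complex zero of f of modulus ω; that is, every α ∈ ℂ with f(α) = 0 and |α| = ω satisfies α = ω. -/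
/-!
Taking real parts in `f(α) = 0 = f(|α|)` gives `Σ a_k (|α|^k - Re α^k) = 0`, a sum of nonnegative
terms (the constant term vanishes whatever the sign of `a_0`). Hence `α^k = |α|^k` whenever
`a_k ≠ 0`, in particular for `k = m` and `k = ℓ`, and coprimality of `m` and `ℓ` forces `α = |α|`.
-/

theorem eq_of_pow_eq_pow_of_coprime {G₀ : Type*} [CommGroupWithZero G₀] {x y : G₀} {m n : ℕ}
    (hmn : m.Coprime n) (hm : x ^ m = y ^ m) (hn : x ^ n = y ^ n) : x = y := by
  rcases eq_or_ne y 0 with rfl | hy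
  · obtain hk | hk : m ≠ 0 ∨ n ≠ 0 := by
      by_contra! h
      simp [h.1, h.2] at hmn
    · exact (pow_eq_zero_iff hk).1 (hm.trans (zero_pow hk))
    · exact (pow_eq_zero_iff hk).1 (hn.trans (zero_pow hk))
  · rw [← div_eq_one_iff_eq hy, ← pow_eq_one_iff_of_coprime hmn, div_pow, div_pow, hm, hn,
      div_self (pow_ne_zero _ hy), div_self (pow_ne_zero _ hy)]
    exact ⟨rfl, rfl⟩

theorem Complex.eq_norm_of_re_eq_norm {z : ℂ} (h : z.re = ‖z‖) : z = ‖z‖ :=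
  Complex.ext (by simpa using h)
    (by simpa using (Complex.abs_re_eq_norm.1 (by rw [h, abs_norm])))

theorem Complex.pow_eq_norm_pow_of_sum_re_eq {s : Finset ℕ} {a : ℕ → ℝ} {z : ℂ}
    (ha : ∀ k ∈ s, k ≠ 0 → 0 ≤ a k)
    (h : ∑ k ∈ s, a k * (z ^ k).re = ∑ k ∈ s, a k * ‖z‖ ^ k)
    {k : ℕ} (hk : k ∈ s) (hak : a k ≠ 0) : z ^ k = ‖z‖ ^ k := by
  have hgap : ∀ j ∈ s, 0 ≤ a j * (‖z‖ ^ j - (z ^ j).re) := by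
    intro j hj
    rcases eq_or_ne j 0 with rfl | hj0
    · simp
    · refine mul_nonneg (ha j hj hj0) (sub_nonneg.2 ?_)
      simpa using Complex.re_le_norm (z ^ j)
  have hsum : ∑ j ∈ s, a j * (‖z‖ ^ j - (z ^ j).re) = 0 := by
    simp only [mul_sub, Finset.sum_sub_distrib, h, sub_self]
  have hre : (z ^ k).re = ‖z ^ k‖ := by
    have := (mul_eq_zero.1 ((Finset.sum_eq_zero_iff_of_nonneg hgap).1 hsum k hk)).resolve_left hak
    rw [norm_pow]
    linarith
  simpa using Complex.eq_norm_of_re_eq_norm hre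

theorem positive_zero_unique_on_circle_general (n : ℕ) (a : ℕ → ℝ)
    (hnn : ∀ k, 1 ≤ k → k ≤ n → 0 ≤ a k)
    (m l : ℕ) (hml : m < l) (hln : l ≤ n)
    (hgcd : Nat.gcd m l = 1) (ham : a m ≠ 0) (hal : a l ≠ 0)
    (ω : ℝ)
    (hfω : ∑ k ∈ Finset.range (n + 1), a k * ω ^ k = 0)
    (α : ℂ) (hfα : ∑ k ∈ Finset.range (n + 1), (a k : ℂ) * α ^ k = 0)
    (habs : ‖α‖ = ω) : α = (ω : ℂ) := by
  subst habs
  have hre : ∑ k ∈ Finset.range (n + 1), a k * (α ^ k).re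
      = ∑ k ∈ Finset.range (n + 1), a k * ‖α‖ ^ k := by
    simpa [hfω, Complex.re_sum, Complex.re_ofReal_mul] using congrArg Complex.re hfα
  have hpow : ∀ k ≤ n, a k ≠ 0 → α ^ k = (‖α‖ : ℂ) ^ k := fun k hk hak =>
    Complex.pow_eq_norm_pow_of_sum_re_eq
      (fun j hj hj0 => hnn j (Nat.one_le_iff_ne_zero.2 hj0) (Finset.mem_range_succ_iff.1 hj))
      hre (Finset.mem_range_succ_iff.2 hk) hak
  exact eq_of_pow_eq_pow_of_coprime hgcd (hpow m (hml.le.trans hln) ham) (hpow l hln hal)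

/-- If `f(z) = Σ_{k=0}^n a_k z^k` has real coefficients with `a_k ≥ 0` for
`1 ≤ k ≤ n`, and there are coprime indices `1 ≤ m < ℓ ≤ n` with
`a_m ≠ 0 ≠ a_ℓ`, then a positive real zero `ω` of `f` is the only complex zero
of `f` on the circle `|z| = ω`. -/
theorem positive_zero_unique_on_circle (n : ℕ) (a : ℕ → ℝ)
    (hnn : ∀ k, 1 ≤ k → k ≤ n → 0 ≤ a k)
    (m l : ℕ) (hm : 1 ≤ m) (hml : m < l) (hln : l ≤ n)
    (hgcd : Nat.gcd m l = 1) (ham : a m ≠ 0) (hal : a l ≠ 0)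
    (ω : ℝ) (hω : 0 < ω)
    (hfω : ∑ k ∈ Finset.range (n + 1), a k * ω ^ k = 0)
    (α : ℂ) (hfα : ∑ k ∈ Finset.range (n + 1), (a k : ℂ) * α ^ k = 0)
    (habs : ‖α‖ = ω) : α = (ω : ℂ) :=
  positive_zero_unique_on_circle_general n a hnn m l hml hln hgcd ham hal ω hfω α hfα habs
end

section
/- Let f(z) = a_n z^n − a_{n−1} z^{n−1} − ⋯ − a_1 z − a_0 be a polynomial with real coefficients such that a_k ≥ 0 for all 0 ≤ k ≤ n and a_n a_0 ≠ 0. If there exist indices 1 ≤ m < ℓ ≤ n−1 with gcd(m,ℓ) = 1 and a_m a_ℓ ≠ 0, then f is a dominant polynomial: f has a complex root z_0 such that every complex root z of f with z ≠ z_0 satisfies |z| < |z_0|. -/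
/-!
Let `r₀` be the positive root of `a_n r^n = ∑_{k<n} a_k r^k`; it exists by the intermediate value
theorem and is unique because `r ↦ r⁻ⁿ ∑_{k<n} a_k r^k` is strictly decreasing (as `a_0 > 0`).
For a complex root `z` the triangle inequality gives `a_n |z|^n ≤ ∑ a_k |z|^k`, hence
`|z| ≤ r₀`. If `|z| = r₀` the triangle inequality is an equality, so all the terms `a_k z^k` lie
on one ray; the term `a_0` fixes that ray to be `[0, ∞)`, so `z^m = r₀^m` and `z^ℓ = r₀^ℓ`, and
coprimality of `m` and `ℓ` gives `z = r₀`.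
-/

open Finset ComplexConjugate

theorem eq_of_pow_eq_pow_of_coprime_s16 {G₀ : Type*} [CommGroupWithZero G₀] {z w : G₀} {m l : ℕ}
    (hw : w ≠ 0) (hml : m.Coprime l) (hm : z ^ m = w ^ m) (hl : z ^ l = w ^ l) : z = w := by
  rw [← div_eq_one_iff_eq hw, ← pow_eq_one_iff_of_coprime hml, div_pow, div_pow, hm, hl,
    div_self (pow_ne_zero _ hw), div_self (pow_ne_zero _ hw)]
  exact ⟨rfl, rfl⟩

theorem Complex.exists_norm_eq_one_forall_mul_eq_norm_of_norm_sum_eq {ι : Type*} (s : Finset ι)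
    (f : ι → ℂ) (h : ‖∑ i ∈ s, f i‖ = ∑ i ∈ s, ‖f i‖) :
    ∃ c : ℂ, ‖c‖ = 1 ∧ ∀ i ∈ s, c * f i = ‖f i‖ := by
  set S := ∑ i ∈ s, f i
  by_cases hS : S = 0
  · refine ⟨1, norm_one, fun i hi => ?_⟩
    have hfi : ‖f i‖ = 0 := (sum_eq_zero_iff_of_nonneg fun _ _ => norm_nonneg _).mp
      (by rw [← h, hS, norm_zero]) i hi
    simp [norm_eq_zero.mp hfi]
  set c := conj S / ‖S‖
  have hc : ‖c‖ = 1 := by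
    rw [norm_div, Complex.norm_conj, Complex.norm_real, norm_norm, div_self (norm_ne_zero_iff.mpr hS)]
  have hcS : c * S = ‖S‖ := by
    rw [div_mul_eq_mul_div, mul_comm, Complex.mul_conj', sq,
      mul_div_cancel_right₀ _ (Complex.ofReal_ne_zero.mpr (norm_ne_zero_iff.mpr hS))]
  have hle : ∀ i ∈ s, (c * f i).re ≤ ‖f i‖ := fun i _ =>
    (Complex.re_le_norm _).trans_eq (by rw [norm_mul, hc, one_mul])
  have hsum : ∑ i ∈ s, (c * f i).re = ∑ i ∈ s, ‖f i‖ := by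
    rw [← Complex.re_sum, ← mul_sum, hcS, Complex.ofReal_re, h]
  refine ⟨c, hc, fun i hi => ?_⟩
  have hre : (c * f i).re = ‖c * f i‖ := by
    rw [(sum_eq_sum_iff_of_le hle).mp hsum i hi, norm_mul, hc, one_mul]
  rw [Complex.eq_coe_norm_of_nonneg (Complex.re_eq_norm.mp hre), norm_mul, hc, one_mul]

theorem pow_mul_pow_le_pow_mul_pow {R : Type*} [CommSemiring R] [PartialOrder R]
    [IsOrderedRing R] {r s : R} {k n : ℕ} (hr : 0 ≤ r) (hrs : r ≤ s) (hkn : k ≤ n) :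
    r ^ n * s ^ k ≤ s ^ n * r ^ k := by
  obtain ⟨d, rfl⟩ := Nat.exists_eq_add_of_le hkn
  calc r ^ (k + d) * s ^ k = r ^ k * s ^ k * r ^ d := by ring
    _ ≤ r ^ k * s ^ k * s ^ d :=
      mul_le_mul_of_nonneg_left (pow_le_pow_left₀ hr hrs d)
        (mul_nonneg (pow_nonneg hr k) (pow_nonneg (hr.trans hrs) k))
    _ = s ^ (k + d) * r ^ k := by ring

section CauchyRoot

variable {n : ℕ} {a : ℕ → ℝ}

theorem pow_mul_sum_lt_pow_mul_sum (ha : ∀ k < n, 0 ≤ a k) (ha0 : 0 < a 0) (hn : 0 < n)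
    {r s : ℝ} (hr : 0 ≤ r) (hrs : r < s) :
    r ^ n * ∑ k ∈ range n, a k * s ^ k < s ^ n * ∑ k ∈ range n, a k * r ^ k := by
  rw [mul_sum, mul_sum]
  refine sum_lt_sum (fun k hk => ?_) ⟨0, mem_range.mpr hn, ?_⟩
  · have hk := mem_range.mp hk
    calc r ^ n * (a k * s ^ k) = a k * (r ^ n * s ^ k) := by ring
      _ ≤ a k * (s ^ n * r ^ k) :=
        mul_le_mul_of_nonneg_left (pow_mul_pow_le_pow_mul_pow hr hrs.le hk.le) (ha k hk)
      _ = s ^ n * (a k * r ^ k) := by ring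
  · simpa [mul_comm] using mul_lt_mul_of_pos_left (pow_lt_pow_left₀ hrs hr hn.ne') ha0

theorem le_of_pow_mul_le_sum (ha : ∀ k < n, 0 ≤ a k) (ha0 : 0 < a 0) (hn : 0 < n) {c r r₀ : ℝ}
    (hr₀ : 0 ≤ r₀) (h₀ : c * r₀ ^ n = ∑ k ∈ range n, a k * r₀ ^ k)
    (h : c * r ^ n ≤ ∑ k ∈ range n, a k * r ^ k) : r ≤ r₀ := by
  by_contra! hlt
  have hdec := pow_mul_sum_lt_pow_mul_sum ha ha0 hn hr₀ hlt
  have hmul := mul_le_mul_of_nonneg_left h (pow_nonneg hr₀ n)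
  rw [← h₀] at hdec
  linarith [show r₀ ^ n * (c * r ^ n) = r ^ n * (c * r₀ ^ n) by ring]

theorem exists_sum_lt_mul_pow (a : ℕ → ℝ) (n : ℕ) {c : ℝ} (hc : 0 < c) :
    ∃ R, 0 < R ∧ ∑ k ∈ range n, a k * R ^ k < c * R ^ n := by
  set A := ∑ k ∈ range n, |a k|
  have hA : 0 ≤ A := sum_nonneg fun k _ => abs_nonneg (a k)
  set R := 1 + A / c
  have hR : 1 ≤ R := le_add_of_nonneg_right (by positivity)
  have hAR : A < c * R := by
    rw [mul_add, mul_one, mul_div_cancel₀ _ hc.ne']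
    linarith
  have hbound : R * ∑ k ∈ range n, a k * R ^ k ≤ A * R ^ n := by
    rw [mul_sum, sum_mul]
    refine sum_le_sum fun k hk => ?_
    calc R * (a k * R ^ k) = a k * R ^ (k + 1) := by ring
      _ ≤ |a k| * R ^ (k + 1) := by gcongr; exact le_abs_self _
      _ ≤ |a k| * R ^ n := by gcongr; exact mem_range.mp hk
  refine ⟨R, by positivity, lt_of_mul_lt_mul_left ?_ (by positivity : 0 ≤ R)⟩
  calc R * ∑ k ∈ range n, a k * R ^ k ≤ A * R ^ n := hbound
    _ < c * R * R ^ n := by gcongr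
    _ = R * (c * R ^ n) := by ring

theorem exists_pos_pow_mul_eq_sum (hn : 0 < n) (ha0 : 0 < a 0) {c : ℝ} (hc : 0 < c) :
    ∃ r₀, 0 < r₀ ∧ c * r₀ ^ n = ∑ k ∈ range n, a k * r₀ ^ k := by
  obtain ⟨R, hR, hlt⟩ := exists_sum_lt_mul_pow a n hc
  set g : ℝ → ℝ := fun r => c * r ^ n - ∑ k ∈ range n, a k * r ^ k
  have hg : Continuous g := by fun_prop
  have hg0 : g 0 = -a 0 := by
    obtain ⟨n, rfl⟩ := Nat.exists_eq_add_of_lt hn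
    simp [g, sum_range_succ']
  obtain ⟨r₀, ⟨hr₀, -⟩, hgr₀⟩ :=
    intermediate_value_Ioc hR.le hg.continuousOn (show (0 : ℝ) ∈ Set.Ioc (g 0) (g R) from
      ⟨by linarith, by simp only [g]; linarith⟩)
  exact ⟨r₀, hr₀, sub_eq_zero.mp hgr₀⟩

theorem norm_ofReal_mul_pow {x : ℝ} (hx : 0 ≤ x) (z : ℂ) (k : ℕ) :
    ‖(x : ℂ) * z ^ k‖ = x * ‖z‖ ^ k := by
  rw [norm_mul, norm_pow, Complex.norm_real, Real.norm_of_nonneg hx]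

theorem norm_sum_ofReal_mul_pow_le (ha : ∀ k < n, 0 ≤ a k) (z : ℂ) :
    ‖∑ k ∈ range n, (a k : ℂ) * z ^ k‖ ≤ ∑ k ∈ range n, a k * ‖z‖ ^ k :=
  (norm_sum_le _ _).trans_eq <|
    sum_congr rfl fun k hk => norm_ofReal_mul_pow (ha k (mem_range.mp hk)) z k

theorem eq_norm_of_norm_sum_ofReal_mul_pow_eq (ha : ∀ k < n, 0 ≤ a k) (hn : 0 < n)
    (ha0 : a 0 ≠ 0) {m l : ℕ} (hmn : m < n) (hln : l < n) (hml : m.Coprime l) (ham : a m ≠ 0)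
    (hal : a l ≠ 0) {z : ℂ} (hz : z ≠ 0)
    (h : ‖∑ k ∈ range n, (a k : ℂ) * z ^ k‖ = ∑ k ∈ range n, a k * ‖z‖ ^ k) :
    z = ‖z‖ := by
  have hnorm : ∀ k ∈ range n, ‖(a k : ℂ) * z ^ k‖ = a k * ‖z‖ ^ k := fun k hk =>
    norm_ofReal_mul_pow (ha k (mem_range.mp hk)) z k
  obtain ⟨c, -, hc⟩ := Complex.exists_norm_eq_one_forall_mul_eq_norm_of_norm_sum_eq (range n)
    (fun k => (a k : ℂ) * z ^ k) (h.trans (sum_congr rfl hnorm).symm)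
  have hterm : ∀ k ∈ range n, c * ((a k : ℂ) * z ^ k) = a k * (‖z‖ : ℂ) ^ k := fun k hk => by
    rw [hc k hk, hnorm k hk, Complex.ofReal_mul, Complex.ofReal_pow]
  have hc1 : c = 1 := by
    have h0 := hterm 0 (mem_range.mpr hn)
    simp only [pow_zero, mul_one] at h0
    exact mul_right_cancel₀ (Complex.ofReal_ne_zero.mpr ha0) (h0.trans (one_mul _).symm)
  have hpow : ∀ k < n, a k ≠ 0 → z ^ k = (‖z‖ : ℂ) ^ k := fun k hk hak =>
    mul_left_cancel₀ (Complex.ofReal_ne_zero.mpr hak) <| by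
      simpa [hc1] using hterm k (mem_range.mpr hk)
  exact eq_of_pow_eq_pow_of_coprime_s16 (Complex.ofReal_ne_zero.mpr (norm_ne_zero_iff.mpr hz)) hml
    (hpow m hmn ham) (hpow l hln hal)

end CauchyRoot

theorem dominant_polynomial_general (n : ℕ) (a : ℕ → ℝ)
    (hnn : ∀ k, k ≤ n → 0 ≤ a k) (han : a n ≠ 0) (ha0 : a 0 ≠ 0)
    (m l : ℕ) (hml : m < l) (hln : l + 1 ≤ n)
    (hgcd : Nat.gcd m l = 1) (ham : a m ≠ 0) (hal : a l ≠ 0) :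
    ∃ z₀ : ℂ,
      ((a n : ℂ) * z₀ ^ n - ∑ k ∈ Finset.range n, (a k : ℂ) * z₀ ^ k = 0) ∧
      ∀ z : ℂ, ((a n : ℂ) * z ^ n - ∑ k ∈ Finset.range n, (a k : ℂ) * z ^ k = 0) →
        z ≠ z₀ → ‖z‖ < ‖z₀‖ := by
  have hn : 0 < n := by omega
  have ha : ∀ k < n, 0 ≤ a k := fun k hk => hnn k hk.le
  have ha0' : 0 < a 0 := (ha 0 hn).lt_of_ne' ha0
  obtain ⟨r₀, hr₀, hroot⟩ := exists_pos_pow_mul_eq_sum hn ha0' ((hnn n le_rfl).lt_of_ne' han)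
  refine ⟨r₀, sub_eq_zero.mpr (by exact_mod_cast hroot), fun z hz hne => ?_⟩
  have hnorm : ‖∑ k ∈ range n, (a k : ℂ) * z ^ k‖ = a n * ‖z‖ ^ n := by
    rw [← sub_eq_zero.mp hz, norm_ofReal_mul_pow (hnn n le_rfl)]
  have hle : ‖z‖ ≤ r₀ := le_of_pow_mul_le_sum ha ha0' hn hr₀.le hroot
    (hnorm ▸ norm_sum_ofReal_mul_pow_le ha z)
  rw [Complex.norm_real, Real.norm_of_nonneg hr₀.le]
  refine hle.lt_of_ne fun heq => hne ?_
  have hz : z ≠ 0 := norm_pos_iff.mp (heq ▸ hr₀)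
  rw [eq_norm_of_norm_sum_ofReal_mul_pow_eq ha hn ha0 (by omega) (by omega) hgcd ham hal hz
    (by rw [hnorm, heq, hroot]), heq]

/-- Dominant polynomials: if `f(z) = a_n z^n - a_{n-1} z^{n-1} - ... - a_0`
with `a_k ≥ 0`, `a_n a_0 ≠ 0`, and there are coprime indices
`1 ≤ m < ℓ ≤ n - 1` with `a_m a_ℓ ≠ 0`, then `f` has a unique complex root of
largest modulus. -/
theorem dominant_polynomial (n : ℕ) (a : ℕ → ℝ)
    (hnn : ∀ k, k ≤ n → 0 ≤ a k) (han : a n ≠ 0) (ha0 : a 0 ≠ 0)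
    (m l : ℕ) (hm : 1 ≤ m) (hml : m < l) (hln : l + 1 ≤ n)
    (hgcd : Nat.gcd m l = 1) (ham : a m ≠ 0) (hal : a l ≠ 0) :
    ∃ z₀ : ℂ,
      ((a n : ℂ) * z₀ ^ n - ∑ k ∈ Finset.range n, (a k : ℂ) * z₀ ^ k = 0) ∧
      ∀ z : ℂ, ((a n : ℂ) * z ^ n - ∑ k ∈ Finset.range n, (a k : ℂ) * z ^ k = 0) →
        z ≠ z₀ → ‖z‖ < ‖z₀‖ :=
  dominant_polynomial_general n a hnn han ha0 m l hml hln hgcd ham hal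
end

section
/- Let p be a prime, let 𝓔_0 be a Zeckendorf collection for positive integers, and let 𝓔 be the completion of 𝓔_0. Assume ε_n ≤ min(√p, (p−1)/2) for all n ≥ 1 and all ε ∈ 𝓔. If Q and Z are sequences in ℤ_p with |Q_k|_p > |Q_{k+1}|_p and |Z_k|_p > |Z_{k+1}|_p for all k ≥ 1, and the two subsets X_Q and X_Z of ℤ_p are equal, then Q_k = Z_k for all k ≥ 1. In other words, every decreasing 𝓔-subset of ℤ_p has a unique decreasing fundamental sequence. -/
/-- The order of a finite-support coefficient function: the largest index with
a nonzero value (`0` for the zero function). -/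
noncomputable def ordA (μ : ℕ → ℕ) : ℕ := sSup {n | μ n ≠ 0}

/-- The completion of a Zeckendorf collection `E₀` for positive integers: all
coefficient functions `ε` which agree with some member of `E₀` up to `M k`,
for a strictly increasing sequence of indices `M k` bounding the orders. -/
def Completion (E0 : Set (ℕ → ℕ)) : Set (ℕ → ℕ) :=
  {ε | ∃ (μ : ℕ → ℕ → ℕ) (M : ℕ → ℕ), StrictMono M ∧
    ∀ k, μ k ∈ E0 ∧ ordA (μ k) ≤ M k ∧ ∀ j, j ≤ M k → ε j = μ k j}

/-- The `𝓔`-subset of `ℤ_p` generated by a sequence `Q`: the sums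
`Σ_{k≥1} ε_k Q_k` over the nonzero coefficient functions `ε ∈ E`. -/
noncomputable def padicSubset (p : ℕ) [Fact p.Prime] (E : Set (ℕ → ℕ))
    (Q : ℕ → ℤ_[p]) : Set ℤ_[p] :=
  {x | ∃ ε ∈ E, (∃ k, 1 ≤ k ∧ ε k ≠ 0) ∧
    x = ∑' k : ℕ, (ε (k + 1) : ℤ_[p]) * Q (k + 1)}

/-! Strictly decreasing norms in `ℤ_p` decay at least like `p⁻¹ ^ k`, so every coefficient
series converges, and since the coefficients are units, a nonzero `𝓔`-sum has the norm of its
leading term. Hence the norms occurring in `X_Q` are exactly the `‖Q_k‖`, and `X_Q = X_Z` forces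
`‖Q_k‖ = ‖Z_k‖`. Writing `Q_n = a Z_n + (smaller)` and `Z_n = b Q_n + (smaller)` gives
`p ∣ a b - 1`, so `a = 1` because `a, b ≤ √p`; thus `Q_n - Z_n` and `Z_n - Q_n` are both tails of
`𝓔`-sums. If they are nonzero they have the same leading index `M`, and since `Q_M ≡ Z_M` modulo
the open ball of radius `‖Z_M‖`, adding them gives `p ∣ ε_M + δ_M`, impossible for
`0 < ε_M + δ_M < p`. -/

theorem exists_ne_zero_forall_lt_eq_zero {M : Type*} [Zero M] {c : ℕ → M} (hc : c ≠ 0) :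
    ∃ m, c m ≠ 0 ∧ ∀ j < m, c j = 0 := by
  classical
  have h : ∃ m, c m ≠ 0 := Function.ne_iff.1 hc
  exact ⟨Nat.find h, Nat.find_spec h, fun j hj => not_not.1 (Nat.find_min h hj)⟩

theorem Nat.eq_one_of_dvd_one_sub_mul {p a b : ℕ} (ha : 0 < a) (hb : 0 < b) (hap : a ^ 2 ≤ p)
    (hbp : b ^ 2 ≤ p) (h : (p : ℤ) ∣ 1 - a * b) : a = 1 := by
  have hab : a * b ≤ p := by nlinarith
  have h0 : (1 - a * b : ℤ) = 0 :=
    Int.eq_zero_of_abs_lt_dvd h (abs_lt.2 ⟨by nlinarith, by nlinarith⟩)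
  exact Nat.eq_one_of_mul_eq_one_right (by exact_mod_cast (sub_eq_zero.1 h0).symm)

namespace PadicInt

variable {p : ℕ} [Fact p.Prime]

theorem norm_le_inv_pow_of_strictAnti {w : ℕ → ℤ_[p]} (hw : StrictAnti (‖w ·‖)) (k : ℕ) :
    ‖w k‖ ≤ (p : ℝ)⁻¹ ^ k := by
  suffices ‖w k‖ ≤ (p : ℝ) ^ (-k : ℤ) by simpa [zpow_neg] using this
  induction k with
  | zero => simpa using norm_le_one (w 0)
  | succ k ih =>
    have h := (norm_lt_pow_iff_norm_le_pow_sub_one _ _).1 ((hw k.lt_succ_self).trans_le ih)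
    rwa [← neg_add', ← Nat.cast_succ] at h

theorem norm_natCast_mul_le (a : ℕ) (x : ℤ_[p]) : ‖(a : ℤ_[p]) * x‖ ≤ ‖x‖ := by
  rw [norm_mul]
  exact mul_le_of_le_one_left (norm_nonneg _) (norm_le_one _)

theorem summable_natCast_mul_of_strictAnti {w : ℕ → ℤ_[p]} (hw : StrictAnti (‖w ·‖))
    (c : ℕ → ℕ) : Summable fun k => (c k : ℤ_[p]) * w k := by
  have hp : (p : ℝ)⁻¹ < 1 := inv_lt_one_of_one_lt₀ (mod_cast (Fact.out : p.Prime).one_lt)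
  refine .of_norm_bounded (summable_geometric_of_lt_one (by positivity) hp) fun k => ?_
  exact (norm_natCast_mul_le _ _).trans (norm_le_inv_pow_of_strictAnti hw k)

theorem norm_natCast_eq_one_of_lt {a : ℕ} (h0 : 0 < a) (hp : a < p) : ‖(a : ℤ_[p])‖ = 1 :=
  norm_natCast_eq_one_iff.2 <|
    (Nat.Prime.coprime_iff_not_dvd Fact.out).2 (Nat.not_dvd_of_pos_of_lt h0 hp)

theorem intCast_dvd_of_norm_mul_lt {c : ℤ} {x : ℤ_[p]} (h : ‖(c : ℤ_[p]) * x‖ < ‖x‖) :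
    (p : ℤ) ∣ c := by
  rw [← norm_intCast_lt_one_iff]
  rw [norm_mul] at h
  exact lt_of_mul_lt_mul_right (h.trans_eq (one_mul _).symm) (norm_nonneg x)

theorem intCast_dvd_one_sub_mul_of_norm_sub_lt {x y : ℤ_[p]} {a b : ℕ}
    (hx : ‖x - a * y‖ < ‖x‖) (hy : ‖y - b * x‖ < ‖x‖) : (p : ℤ) ∣ 1 - a * b := by
  have key : ((1 - a * b : ℤ) : ℤ_[p]) * x = (x - a * y) + a * (y - b * x) := by push_cast; ring
  refine intCast_dvd_of_norm_mul_lt (x := x) ?_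
  rw [key]
  exact (IsUltrametricDist.norm_add_le_max _ _).trans_lt
    (max_lt hx ((norm_natCast_mul_le _ _).trans_lt hy))

theorem dvd_add_of_norm_sub_lt {x y u : ℤ_[p]} {a b : ℕ} (hx : ‖x - a * u‖ < ‖u‖)
    (hx' : ‖-x - b * y‖ < ‖u‖) (hy : ‖y - u‖ < ‖u‖) : p ∣ a + b := by
  have key : ((a + b : ℕ) : ℤ) * u = -(x - a * u) + -(-x - b * y) + b * (u - y) := by
    push_cast; ring
  refine Int.natCast_dvd_natCast.1 (intCast_dvd_of_norm_mul_lt (x := u) ?_)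
  rw [key]
  refine (IsUltrametricDist.norm_add_le_max _ _).trans_lt (max_lt ?_ ?_)
  · refine (IsUltrametricDist.norm_add_le_max _ _).trans_lt (max_lt ?_ ?_) <;> rwa [norm_neg]
  · exact (norm_natCast_mul_le _ _).trans_lt (by rwa [norm_sub_rev])

end PadicInt

namespace PadicZeckendorf

open PadicInt

variable {p : ℕ} [Fact p.Prime]

noncomputable def coeffSum (c : ℕ → ℕ) (w : ℕ → ℤ_[p]) : ℤ_[p] :=
  ∑' k, (c k : ℤ_[p]) * w k

@[simp]
theorem coeffSum_zero (w : ℕ → ℤ_[p]) : coeffSum 0 w = 0 := by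
  simp [coeffSum]

theorem coeffSum_single (k : ℕ) (w : ℕ → ℤ_[p]) : coeffSum (Pi.single k 1) w = w k := by
  rw [coeffSum, tsum_eq_single k fun j hj => by simp [hj]]
  simp

theorem norm_coeffSum_le {w : ℕ → ℤ_[p]} (hw : Antitone (‖w ·‖)) (c : ℕ → ℕ) :
    ‖coeffSum c w‖ ≤ ‖w 0‖ :=
  IsUltrametricDist.norm_tsum_le_of_forall_le_of_nonneg (norm_nonneg _) fun k =>
    (norm_natCast_mul_le _ _).trans (hw k.zero_le)

variable {w : ℕ → ℤ_[p]}

theorem coeffSum_eq_add_coeffSum_of_forall_lt_eq_zero (hw : StrictAnti (‖w ·‖)) {c : ℕ → ℕ}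
    {m : ℕ} (hc : ∀ j < m, c j = 0) :
    coeffSum c w = c m * w m + coeffSum (fun k => c (k + m + 1)) (fun k => w (k + m + 1)) := by
  have hs := summable_natCast_mul_of_strictAnti hw c
  rw [coeffSum, ← hs.sum_add_tsum_nat_add m, Finset.sum_eq_zero fun j hj => by
    simp [hc j (Finset.mem_range.1 hj)], zero_add]
  rw [(summable_nat_add_iff m).2 hs |>.tsum_eq_zero_add]
  simp only [zero_add, coeffSum, Nat.add_right_comm _ 1 m]

theorem norm_coeffSum_tail_lt (hw : StrictAnti (‖w ·‖)) (c : ℕ → ℕ) (m : ℕ) :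
    ‖coeffSum (fun k => c (k + m + 1)) (fun k => w (k + m + 1))‖ < ‖w m‖ :=
  (norm_coeffSum_le (fun _ _ h => hw.antitone (by omega)) _).trans_lt (hw (by omega))

theorem norm_coeffSum_sub_lt (hw : StrictAnti (‖w ·‖)) {c : ℕ → ℕ} {m : ℕ}
    (hc : ∀ j < m, c j = 0) : ‖coeffSum c w - c m * w m‖ < ‖w m‖ := by
  rw [coeffSum_eq_add_coeffSum_of_forall_lt_eq_zero hw hc, add_sub_cancel_left]
  exact norm_coeffSum_tail_lt hw c m

theorem norm_coeffSum_eq (hw : StrictAnti (‖w ·‖)) {c : ℕ → ℕ} {m : ℕ}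
    (hc : ∀ j < m, c j = 0) (h0 : 0 < c m) (hp : c m < p) : ‖coeffSum c w‖ = ‖w m‖ := by
  have hlead : ‖(c m : ℤ_[p]) * w m‖ = ‖w m‖ := by
    rw [norm_mul, norm_natCast_eq_one_of_lt h0 hp, one_mul]
  have h := norm_coeffSum_sub_lt hw hc
  rw [← hlead, sub_eq_add_neg, ← norm_neg ((c m : ℤ_[p]) * w m)] at h
  rw [norm_eq_of_norm_add_lt_right h, norm_neg, hlead]


theorem exists_norm_coeffSum_eq (hw : StrictAnti (‖w ·‖)) {c : ℕ → ℕ} (hc : ∀ k, c k < p)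
    (hc0 : c ≠ 0) :
    ∃ m, 0 < c m ∧ ‖coeffSum c w‖ = ‖w m‖ ∧ ‖coeffSum c w - c m * w m‖ < ‖w m‖ := by
  obtain ⟨m, hm, hlt⟩ := exists_ne_zero_forall_lt_eq_zero hc0
  exact ⟨m, Nat.pos_of_ne_zero hm, norm_coeffSum_eq hw hlt (Nat.pos_of_ne_zero hm) (hc m),
    norm_coeffSum_sub_lt hw hlt⟩

def sumSet (C : Set (ℕ → ℕ)) (w : ℕ → ℤ_[p]) : Set ℤ_[p] :=
  {x | ∃ c ∈ C, c ≠ 0 ∧ x = coeffSum c w}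

theorem padicSubset_eq_sumSet (E : Set (ℕ → ℕ)) (W : ℕ → ℤ_[p]) :
    padicSubset p E W = sumSet ((fun ε k => ε (k + 1)) '' E) (fun k => W (k + 1)) := by
  ext x
  simp only [padicSubset, sumSet, coeffSum, Set.exists_mem_image]
  refine exists_congr fun ε => and_congr_right fun _ => and_congr_left fun _ => ?_
  rw [Ne, funext_iff, not_forall]
  constructor
  · rintro ⟨k, hk, h⟩
    exact ⟨k - 1, by rwa [Nat.sub_add_cancel hk]⟩
  · rintro ⟨k, h⟩
    exact ⟨k + 1, k.succ_pos, h⟩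

theorem single_mem_sumSet {C : Set (ℕ → ℕ)} (hsingle : ∀ k, Pi.single k 1 ∈ C)
    (w : ℕ → ℤ_[p]) (k : ℕ) : w k ∈ sumSet C w :=
  ⟨Pi.single k 1, hsingle k, by simp, (coeffSum_single k w).symm⟩

variable {C : Set (ℕ → ℕ)}

theorem norm_image_sumSet (hw : StrictAnti (‖w ·‖)) (hC : ∀ c ∈ C, ∀ k, c k < p)
    (hsingle : ∀ k, Pi.single k 1 ∈ C) : norm '' sumSet C w = Set.range (‖w ·‖) := by
  ext r
  constructor
  · rintro ⟨x, ⟨c, hcC, hc0, rfl⟩, rfl⟩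
    obtain ⟨m, -, hm, -⟩ := exists_norm_coeffSum_eq hw (hC c hcC) hc0
    exact ⟨m, hm.symm⟩
  · rintro ⟨k, rfl⟩
    exact ⟨w k, single_mem_sumSet hsingle w k, rfl⟩

theorem exists_eq_natCast_mul_add_coeffSum (hw : StrictAnti (‖w ·‖))
    (hC : ∀ c ∈ C, ∀ k, c k < p) {x : ℤ_[p]} (hx : x ∈ sumSet C w) {n : ℕ}
    (hn : ‖x‖ = ‖w n‖) : ∃ c ∈ C, 0 < c n ∧
      x = c n * w n + coeffSum (fun k => c (k + n + 1)) (fun k => w (k + n + 1)) := by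
  obtain ⟨c, hcC, hc0, rfl⟩ := hx
  obtain ⟨m, hm, hlt⟩ := exists_ne_zero_forall_lt_eq_zero hc0
  obtain rfl : m = n := hw.injective <|
    (norm_coeffSum_eq hw hlt (Nat.pos_of_ne_zero hm) (hC c hcC m)).symm.trans hn
  exact ⟨c, hcC, Nat.pos_of_ne_zero hm, coeffSum_eq_add_coeffSum_of_forall_lt_eq_zero hw hlt⟩

variable {q z : ℕ → ℤ_[p]}

theorem norm_eq_of_sumSet_eq (hq : StrictAnti (‖q ·‖)) (hz : StrictAnti (‖z ·‖))
    (hsingle : ∀ k, Pi.single k 1 ∈ C) (hX : sumSet C q = sumSet C z)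
    (hC : ∀ c ∈ C, ∀ k, c k < p) (n : ℕ) : ‖q n‖ = ‖z n‖ := by
  have h := norm_image_sumSet hq hC hsingle
  rw [hX, norm_image_sumSet hz hC hsingle] at h
  have := (hq.dual_right.range_inj hz.dual_right).1 (by rw [Set.range_comp, Set.range_comp, h])
  exact congrFun this n

theorem exists_sub_eq_coeffSum_of_sumSet_eq (hq : StrictAnti (‖q ·‖)) (hz : StrictAnti (‖z ·‖))
    (hsingle : ∀ k, Pi.single k 1 ∈ C) (hX : sumSet C q = sumSet C z)
    (hC : ∀ c ∈ C, ∀ k, c k < p)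
    (hsq : ∀ c ∈ C, ∀ k, c k ^ 2 ≤ p) (n : ℕ) :
    ∃ c ∈ C, q n - z n = coeffSum (fun k => c (k + n + 1)) (fun k => z (k + n + 1)) := by
  have hnorm := norm_eq_of_sumSet_eq hq hz hsingle hX hC n
  obtain ⟨c, hcC, ha, hqn⟩ := exists_eq_natCast_mul_add_coeffSum hz hC
    (hX ▸ single_mem_sumSet hsingle q n) hnorm
  obtain ⟨d, hdC, hb, hzn⟩ := exists_eq_natCast_mul_add_coeffSum hq hC
    (hX ▸ single_mem_sumSet hsingle z n) hnorm.symm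
  have hqa : ‖q n - c n * z n‖ < ‖q n‖ := by
    rw [hnorm, hqn, add_sub_cancel_left]; exact norm_coeffSum_tail_lt hz c n
  have hzb : ‖z n - d n * q n‖ < ‖q n‖ := by
    rw [hzn, add_sub_cancel_left]; exact norm_coeffSum_tail_lt hq d n
  have ha1 := Nat.eq_one_of_dvd_one_sub_mul ha hb (hsq c hcC n) (hsq d hdC n)
    (intCast_dvd_one_sub_mul_of_norm_sub_lt hqa hzb)
  exact ⟨c, hcC, by rw [hqn, ha1]; push_cast; ring⟩

theorem eq_of_sumSet_eq (hq : StrictAnti (‖q ·‖)) (hz : StrictAnti (‖z ·‖))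
    (hsingle : ∀ k, Pi.single k 1 ∈ C) (hX : sumSet C q = sumSet C z)
    (hsq : ∀ c ∈ C, ∀ k, c k ^ 2 ≤ p)
    (hhalf : ∀ c ∈ C, ∀ k, 2 * c k < p) (n : ℕ) : q n = z n := by
  have hC : ∀ c ∈ C, ∀ k, c k < p := fun c hc k => by have := hhalf c hc k; omega
  have hnorm := norm_eq_of_sumSet_eq hq hz hsingle hX hC
  obtain ⟨c, hcC, hc⟩ := exists_sub_eq_coeffSum_of_sumSet_eq hq hz hsingle hX hC hsq n
  obtain ⟨d, hdC, hd⟩ := exists_sub_eq_coeffSum_of_sumSet_eq hz hq hsingle hX.symm hC hsq n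
  by_contra hne
  have hz' : StrictAnti fun k => ‖z (k + n + 1)‖ := fun _ _ h => hz (by omega)
  have hq' : StrictAnti fun k => ‖q (k + n + 1)‖ := fun _ _ h => hq (by omega)
  obtain ⟨m, hm, h1, e1⟩ := exists_norm_coeffSum_eq hz' (fun k => hC c hcC _)
    fun h => hne <| sub_eq_zero.1 <| by rw [hc, h, coeffSum_zero]
  obtain ⟨m', hm', h2, e2⟩ := exists_norm_coeffSum_eq hq' (fun k => hC d hdC _)
    fun h => hne <| (sub_eq_zero.1 <| by rw [hd, h, coeffSum_zero]).symm
  rw [← hc] at h1 e1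
  rw [← hd, hnorm] at h2 e2
  obtain rfl : m = m' := by
    have := hz.injective (h1.symm.trans ((norm_sub_rev _ _).trans h2))
    omega
  obtain ⟨e, -, he⟩ := exists_sub_eq_coeffSum_of_sumSet_eq hq hz hsingle hX hC hsq (m + n + 1)
  have hdvd := dvd_add_of_norm_sub_lt e1 (by rwa [neg_sub]) (he ▸ norm_coeffSum_tail_lt hz e _)
  have := hhalf c hcC (m + n + 1)
  have := hhalf d hdC (m + n + 1)
  exact Nat.not_dvd_of_pos_of_lt (by omega) (by omega) hdvd

end PadicZeckendorf

theorem subset_completion (E0 : Set (ℕ → ℕ)) : E0 ⊆ Completion E0 := fun μ hμ =>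
  ⟨fun _ => μ, fun k => ordA μ + k, fun _ _ h => Nat.add_lt_add_left h _,
    fun _ => ⟨hμ, Nat.le_add_right _ _, fun _ _ => rfl⟩⟩

/-- The weak converse of Zeckendorf's theorem for `p`-adic integers: under the
bound `ε_n ≤ min (√p) ((p-1)/2)` on the values of the completion `𝓔` of a
Zeckendorf collection `𝓔₀`, a decreasing `𝓔`-subset of `ℤ_p` has a unique
decreasing fundamental sequence. -/
theorem padic_weak_converse (p : ℕ) [Fact p.Prime]
    (E0 : Set (ℕ → ℕ)) (hE0 : IsZeckendorf E0)
    (hbound : ∀ ε ∈ Completion E0, ∀ n, 1 ≤ n →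
      (ε n : ℝ) ≤ min (Real.sqrt p) (((p : ℝ) - 1) / 2))
    (Q Z : ℕ → ℤ_[p])
    (hQdec : ∀ k, 1 ≤ k → ‖Q (k + 1)‖ < ‖Q k‖)
    (hZdec : ∀ k, 1 ≤ k → ‖Z (k + 1)‖ < ‖Z k‖)
    (hX : padicSubset p (Completion E0) Q = padicSubset p (Completion E0) Z) :
    ∀ k, 1 ≤ k → Q k = Z k := by
  obtain ⟨⟨-, -, hbeta⟩, -, -⟩ := hE0
  set C := (fun ε k => ε (k + 1)) '' Completion E0
  have hsq : ∀ c ∈ C, ∀ k, c k ^ 2 ≤ p := by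
    rintro _ ⟨ε, hε, rfl⟩ k
    have := (hbound ε hε (k + 1) k.succ_pos).trans (min_le_left _ _)
    exact_mod_cast (Real.le_sqrt (by positivity) (by positivity)).1 this
  have hhalf : ∀ c ∈ C, ∀ k, 2 * c k < p := by
    rintro _ ⟨ε, hε, rfl⟩ k
    have := (hbound ε hε (k + 1) k.succ_pos).trans (min_le_right _ _)
    exact_mod_cast (by linarith : (2 * ε (k + 1) : ℝ) < p)
  have hsingle : ∀ k, Pi.single k 1 ∈ C := fun k =>
    ⟨beta (k + 1), subset_completion E0 (hbeta _ k.succ_pos),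
      by ext j; simp [beta, Pi.single_apply]⟩
  rw [PadicZeckendorf.padicSubset_eq_sumSet, PadicZeckendorf.padicSubset_eq_sumSet] at hX
  intro k hk
  obtain ⟨n, rfl⟩ := Nat.exists_eq_add_of_le' hk
  exact PadicZeckendorf.eq_of_sumSet_eq
    (strictAnti_nat_of_succ_lt fun k => hQdec (k + 1) k.succ_pos)
    (strictAnti_nat_of_succ_lt fun k => hZdec (k + 1) k.succ_pos) hsingle hX hsq hhalf n
end
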